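/- arXiv:1801.01208 — 8 statements merged into one kernel-verified Lean document; each statement's English description precedes it below -/
import Mathlib

section
/- Let P = {(x,y) ∈ [0,3]³ × [0,1]³ : x₁ + x₂ + x₃ = 4, x_i ≤ 4y_i for i = 1,2,3}. Let P_U = {(x,y,z) ∈ ℝ³ × ℝ³ × ℝ⁹ : (x,y) ∈ P, x_i = z_{i1} + 2z_{i2} + 3z_{i3}, z_{i1} + z_{i2} + z_{i3} ≤ 1, 0 ≤ z_{ij} ≤ 1 for i = 1,2,3} be its unary binary extended formulation, and let P_{L+} = {(x,y,z) ∈ ℝ³ × ℝ³ × ℝ⁶ : (x,y) ∈ P, x_i = z_{i1} + 2z_{i2}, 0 ≤ z_{ij} ≤ 1 for i = 1,2,3} be its (perfect) logarithmic binary extended formulation. Then proj_{x,y}(SC(P_U)) ⊊ proj_{x,y}(SC(P_{L+})), where both split closures are taken with respect to all variables. In particular, the point (x̄,ȳ) = ((3/2, 1, 3/2), (1/2, 1/2, 1/2)) belongs to proj_{x,y}(SC(P_{L+})) but not to proj_{x,y}(SC(P_U)), since y₁ + y₂ + y₃ ≥ 2 is valid for SC(P_U). -/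
open Set

/-- The split closure of `P` with respect to a family `Λ` of (integral) linear
functionals. -/
noncomputable def splitClosure {E : Type*} [AddCommGroup E] [Module ℝ E]
    (Λ : Set (E → ℝ)) (P : Set E) : Set E :=
  ⋂ f ∈ Λ, ⋂ c : ℤ, convexHull ℝ (P \ {x | (c : ℝ) < f x ∧ f x < c + 1})

/-- Split functionals with integer coefficients on all variables of the space
`ℝ³ × ℝ³ × (binarization variables)`. -/
def splitsFull (m : ℕ) :
    Set ((((Fin 3 → ℝ) × (Fin 3 → ℝ)) × (Fin 3 → Fin m → ℝ)) → ℝ) :=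
  {f | ∃ (a b : Fin 3 → ℤ) (c : Fin 3 → Fin m → ℤ), f = fun p =>
    (∑ i, (a i : ℝ) * p.1.1 i) + (∑ i, (b i : ℝ) * p.1.2 i) +
      ∑ i, ∑ j, (c i j : ℝ) * p.2 i j}

abbrev E3' := (((Fin 3 → ℝ) × (Fin 3 → ℝ)) × (Fin 3 → Fin 3 → ℝ))
abbrev E2' := (((Fin 3 → ℝ) × (Fin 3 → ℝ)) × (Fin 3 → Fin 2 → ℝ))

def Tmap : E3' → E2' := fun q => (q.1, fun i => ![q.2 i 0 + q.2 i 2, q.2 i 1 + q.2 i 2])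

lemma Tlin : IsLinearMap ℝ Tmap := by
  constructor
  · intro a b
    refine Prod.ext rfl ?_
    funext i j
    fin_cases j <;> simp [Tmap] <;> ring
  · intro r a
    refine Prod.ext rfl ?_
    funext i j
    fin_cases j <;> simp [Tmap] <;> ring

lemma memQ (x y : Fin 3 → ℝ) (z : Fin 3 → Fin 2 → ℝ)
    (h : ∀ i, (0 ≤ x i ∧ x i ≤ 3) ∧ (0 ≤ y i ∧ y i ≤ 1) ∧ x i ≤ 4 * y i ∧
      (0 ≤ z i 0 ∧ z i 0 ≤ 1) ∧ (0 ≤ z i 1 ∧ z i 1 ≤ 1) ∧ x i = z i 0 + 2 * z i 1)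
    (hsum : x 0 + x 1 + x 2 = 4) :
    ((x, y), z) ∈ {p : E2' | ((∀ i, 0 ≤ p.1.1 i ∧ p.1.1 i ≤ 3) ∧
      (∀ i, 0 ≤ p.1.2 i ∧ p.1.2 i ≤ 1) ∧ (∑ i, p.1.1 i) = 4 ∧ ∀ i, p.1.1 i ≤ 4 * p.1.2 i) ∧
      ∀ i, (∀ j, 0 ≤ p.2 i j ∧ p.2 i j ≤ 1) ∧ p.1.1 i = p.2 i 0 + 2 * p.2 i 1} := by
  refine ⟨⟨fun i => (h i).1, fun i => (h i).2.1, ?_, fun i => (h i).2.2.1⟩,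
    fun i => ⟨fun j => ?_, (h i).2.2.2.2.2⟩⟩
  · rw [Fin.sum_univ_three]; exact hsum
  · obtain ⟨h0, h1, -⟩ := (h i).2.2.2
    fin_cases j
    · exact h0
    · exact h1

lemma seg_helper {E : Type*} [AddCommGroup E] [Module ℝ E] {Q : Set E}
    {u v p : E} (hu : u ∈ Q) (hv : v ∈ Q)
    (hmid : (1/2 : ℝ) • u + (1/2 : ℝ) • v = p)
    {f : E → ℝ} {c m₁ m₂ : ℤ}
    (hfu : f u = m₁) (hfv : f v = m₂) (hfp : f p = ((m₁ : ℝ) + m₂) / 2)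
    (hc : (c : ℝ) < f p) (hc1 : f p < c + 1) :
    p ∈ convexHull ℝ (Q \ {x | (c : ℝ) < f x ∧ f x < c + 1}) := by
  have key : ∀ (q : E) (m : ℤ), m ≤ c ∨ c + 1 ≤ m → q ∈ Q → f q = m →
      q ∈ Q \ {x | (c : ℝ) < f x ∧ f x < c + 1} := by
    intro q m hm hq hfq
    refine ⟨hq, fun hin => ?_⟩
    obtain ⟨hl, hr⟩ := hin
    rw [hfq] at hl hr
    have h1 : c < m := by exact_mod_cast hl
    have h2 : m < c + 1 := by exact_mod_cast hr
    omega
  have hne : m₁ ≠ m₂ := by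
    rintro rfl
    rw [hfp] at hc hc1
    have h1 : c < m₁ := by exact_mod_cast (by linarith : (c:ℝ) < m₁)
    have h2 : m₁ < c + 1 := by exact_mod_cast (by linarith : (m₁:ℝ) < c + 1)
    omega
  have hseg : p ∈ segment ℝ u v :=
    ⟨1/2, 1/2, by norm_num, by norm_num, by norm_num, hmid⟩
  rcases lt_or_gt_of_ne hne with h | h
  · have h1 : (m₁ : ℝ) < m₂ := by exact_mod_cast h
    have hm1 : m₁ ≤ c := by
      have h3 : (m₁ : ℝ) < c + 1 := by rw [hfp] at hc1; linarith
      have : m₁ < c + 1 := by exact_mod_cast h3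
      omega
    have hm2 : (c : ℤ) + 1 ≤ m₂ := by
      have h3 : (c : ℝ) < m₂ := by rw [hfp] at hc; linarith
      have : c < m₂ := by exact_mod_cast h3
      omega
    exact segment_subset_convexHull (key u m₁ (Or.inl hm1) hu hfu)
      (key v m₂ (Or.inr hm2) hv hfv) hseg
  · have h1 : (m₂ : ℝ) < m₁ := by exact_mod_cast h
    have hm2 : m₂ ≤ c := by
      have h3 : (m₂ : ℝ) < c + 1 := by rw [hfp] at hc1; linarith
      have : m₂ < c + 1 := by exact_mod_cast h3
      omega
    have hm1 : (c : ℤ) + 1 ≤ m₁ := by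
      have h3 : (c : ℝ) < m₁ := by rw [hfp] at hc; linarith
      have : c < m₁ := by exact_mod_cast h3
      omega
    exact segment_subset_convexHull (key u m₁ (Or.inr hm1) hu hfu)
      (key v m₂ (Or.inl hm2) hv hfv) hseg


lemma aux4 (P : Set ((Fin 3 → ℝ) × (Fin 3 → ℝ)))
    (hP : P = {xy | (∀ i, 0 ≤ xy.1 i ∧ xy.1 i ≤ 3) ∧ (∀ i, 0 ≤ xy.2 i ∧ xy.2 i ≤ 1) ∧
      (∑ i, xy.1 i) = 4 ∧ ∀ i, xy.1 i ≤ 4 * xy.2 i})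
    (PU : Set (((Fin 3 → ℝ) × (Fin 3 → ℝ)) × (Fin 3 → Fin 3 → ℝ)))
    (hPU : PU = {p | p.1 ∈ P ∧ ∀ i,
      (∀ j, 0 ≤ p.2 i j ∧ p.2 i j ≤ 1) ∧
      p.1.1 i = p.2 i 0 + 2 * p.2 i 1 + 3 * p.2 i 2 ∧
      p.2 i 0 + p.2 i 1 + p.2 i 2 ≤ 1}) :
    ∀ p ∈ splitClosure (splitsFull 3) PU, 2 ≤ ∑ i, p.1.2 i := by
  intro p hp
  set f₀ : (((Fin 3 → ℝ) × (Fin 3 → ℝ)) × (Fin 3 → Fin 3 → ℝ)) → ℝ :=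
    fun q => ∑ i, ∑ j, q.2 i j with hf₀def
  have hf₀ : f₀ ∈ splitsFull 3 := by
    refine ⟨0, 0, fun _ _ => 1, ?_⟩
    funext q
    simp [hf₀def, Fin.sum_univ_three]
  have hlin₀ : IsLinearMap ℝ f₀ := by
    constructor
    · intro a b; simp [hf₀def, Finset.sum_add_distrib]
    · intro r a; simp [hf₀def, Finset.mul_sum]
  have hA : p ∈ {q : (((Fin 3 → ℝ) × (Fin 3 → ℝ)) × (Fin 3 → Fin 3 → ℝ)) | 2 ≤ f₀ q} := by
    refine convexHull_min ?_ (convex_halfSpace_ge hlin₀ 2)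
      (Set.mem_iInter.1 (Set.mem_iInter₂.1 hp f₀ hf₀) 1)
    rintro q ⟨hq, hqS⟩
    rw [hPU] at hq
    obtain ⟨hq1, hq2⟩ := hq
    rw [hP] at hq1
    obtain ⟨hx, hy, hsum, hxy⟩ := hq1
    have e0 := (hq2 0).2.1; have e1 := (hq2 1).2.1; have e2 := (hq2 2).2.1
    have z00 := ((hq2 0).1 0).1; have z01 := ((hq2 0).1 1).1; have z02 := ((hq2 0).1 2).1
    have z10 := ((hq2 1).1 0).1; have z11 := ((hq2 1).1 1).1; have z12 := ((hq2 1).1 2).1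
    have z20 := ((hq2 2).1 0).1; have z21 := ((hq2 2).1 1).1; have z22 := ((hq2 2).1 2).1
    rw [Fin.sum_univ_three] at hsum
    have hfq : f₀ q = q.2 0 0 + q.2 0 1 + q.2 0 2 + (q.2 1 0 + q.2 1 1 + q.2 1 2)
        + (q.2 2 0 + q.2 2 1 + q.2 2 2) := by
      simp only [hf₀def, Fin.sum_univ_three]
    simp only [Set.mem_setOf_eq, not_and, not_lt] at hqS
    show (2:ℝ) ≤ f₀ q
    rcases le_or_gt (f₀ q) 1 with hle | hlt
    · exfalso; rw [hfq] at hle; linarith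
    · have := hqS (by push_cast; linarith [hlt]); push_cast at this; linarith
  -- per-coordinate splits on y i
  have hB : ∀ i : Fin 3, (∑ j, p.2 i j) ≤ p.1.2 i := by
    intro i
    set g : (((Fin 3 → ℝ) × (Fin 3 → ℝ)) × (Fin 3 → Fin 3 → ℝ)) → ℝ :=
      fun q => q.1.2 i with hgdef
    have hg : g ∈ splitsFull 3 := by
      refine ⟨0, fun j => if j = i then 1 else 0, 0, ?_⟩
      funext q
      fin_cases i <;> simp [hgdef, Fin.sum_univ_three]
    have hlin : IsLinearMap ℝ (fun q : (((Fin 3 → ℝ) × (Fin 3 → ℝ)) × (Fin 3 → Fin 3 → ℝ)) =>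
        (∑ j, q.2 i j) - q.1.2 i) := by
      constructor
      · intro a b; simp [Finset.sum_add_distrib]; ring
      · intro r a; simp [Finset.mul_sum, mul_sub]
    have hmem : p ∈ {q : (((Fin 3 → ℝ) × (Fin 3 → ℝ)) × (Fin 3 → Fin 3 → ℝ)) |
        (∑ j, q.2 i j) - q.1.2 i ≤ 0} := by
      refine convexHull_min ?_ (convex_halfSpace_le hlin 0)
        (Set.mem_iInter.1 (Set.mem_iInter₂.1 hp g hg) 0)
      rintro q ⟨hq, hqS⟩
      rw [hPU] at hq
      obtain ⟨hq1, hq2⟩ := hq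
      rw [hP] at hq1
      obtain ⟨hx, hy, hsum, hxy⟩ := hq1
      have ei := (hq2 i).2.1
      have es := (hq2 i).2.2
      have z0 := ((hq2 i).1 0).1; have z1 := ((hq2 i).1 1).1; have z2 := ((hq2 i).1 2).1
      simp only [Set.mem_setOf_eq, not_and, not_lt] at hqS
      show (∑ j, q.2 i j) - q.1.2 i ≤ 0
      rw [Fin.sum_univ_three]
      rcases le_or_gt (q.1.2 i) 0 with hle | hlt
      · -- y_i = 0 forces x_i = 0 and all z = 0
        have hyi : q.1.2 i = 0 := le_antisymm hle (hy i).1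
        have hxi : q.1.1 i = 0 := le_antisymm (by rw [← hyi] at hle ⊢; linarith [hxy i, hyi]) (hx i).1
        rw [hxi] at ei
        linarith
      · have h1 : (1:ℝ) ≤ q.1.2 i := by
          have := hqS (by push_cast; linarith) ; push_cast at this; linarith
        linarith
    simpa using hmem
  rw [Fin.sum_univ_three]
  have hA' : (2:ℝ) ≤ f₀ p := hA
  rw [hf₀def] at hA'
  simp only [Fin.sum_univ_three] at hA'
  have b0 := hB 0; have b1 := hB 1; have b2 := hB 2
  rw [Fin.sum_univ_three] at b0 b1 b2
  linarith

lemma aux2 (P : Set ((Fin 3 → ℝ) × (Fin 3 → ℝ)))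
    (hP : P = {xy | (∀ i, 0 ≤ xy.1 i ∧ xy.1 i ≤ 3) ∧ (∀ i, 0 ≤ xy.2 i ∧ xy.2 i ≤ 1) ∧
      (∑ i, xy.1 i) = 4 ∧ ∀ i, xy.1 i ≤ 4 * xy.2 i})
    (PLplus : Set (((Fin 3 → ℝ) × (Fin 3 → ℝ)) × (Fin 3 → Fin 2 → ℝ)))
    (hPLplus : PLplus = {p | p.1 ∈ P ∧ ∀ i,
      (∀ j, 0 ≤ p.2 i j ∧ p.2 i j ≤ 1) ∧
      p.1.1 i = p.2 i 0 + 2 * p.2 i 1}) :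
    (![(3 : ℝ) / 2, 1, 3 / 2], ![(1 : ℝ) / 2, 1 / 2, 1 / 2]) ∈
      Prod.fst '' splitClosure (splitsFull 2) PLplus := by
  have hQ : PLplus = {p : E2' | ((∀ i, 0 ≤ p.1.1 i ∧ p.1.1 i ≤ 3) ∧
      (∀ i, 0 ≤ p.1.2 i ∧ p.1.2 i ≤ 1) ∧ (∑ i, p.1.1 i) = 4 ∧ ∀ i, p.1.1 i ≤ 4 * p.1.2 i) ∧
      ∀ i, (∀ j, 0 ≤ p.2 i j ∧ p.2 i j ≤ 1) ∧ p.1.1 i = p.2 i 0 + 2 * p.2 i 1} := by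
    rw [hPLplus, hP]; rfl
  have hpmem : ((![(3 : ℝ) / 2, 1, 3 / 2], ![(1 : ℝ) / 2, 1 / 2, 1 / 2]),
      ![![(1:ℝ)/2, 1/2], ![0, 1/2], ![1/2, 1/2]]) ∈ PLplus := by
    rw [hQ]; apply memQ
    · intro i; fin_cases i <;> norm_num
    · norm_num [Matrix.cons_val_two, Matrix.tail_cons, Matrix.head_cons]
  have hu1 : ((![(0:ℝ), 2, 2], ![(0:ℝ), 1, 1/2]), ![![(0:ℝ),0], ![0,1], ![0,1]]) ∈ PLplus := by
    rw [hQ]; apply memQ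
    · intro i; fin_cases i <;> norm_num
    · norm_num [Matrix.cons_val_two, Matrix.tail_cons, Matrix.head_cons]
  have hv1 : ((![(3:ℝ), 0, 1], ![(1:ℝ), 0, 1/2]), ![![(1:ℝ),1], ![0,0], ![1,0]]) ∈ PLplus := by
    rw [hQ]; apply memQ
    · intro i; fin_cases i <;> norm_num
    · norm_num [Matrix.cons_val_two, Matrix.tail_cons, Matrix.head_cons]
  have hu2 : ((![(1:ℝ), 0, 3], ![(1:ℝ)/2, 0, 1]), ![![(1:ℝ),0], ![0,0], ![1,1]]) ∈ PLplus := by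
    rw [hQ]; apply memQ
    · intro i; fin_cases i <;> norm_num
    · norm_num [Matrix.cons_val_two, Matrix.tail_cons, Matrix.head_cons]
  have hv2 : ((![(2:ℝ), 2, 0], ![(1:ℝ)/2, 1, 0]), ![![(0:ℝ),1], ![0,1], ![0,0]]) ∈ PLplus := by
    rw [hQ]; apply memQ
    · intro i; fin_cases i <;> norm_num
    · norm_num [Matrix.cons_val_two, Matrix.tail_cons, Matrix.head_cons]
  have hu3 : ((![(1:ℝ), 2, 1], ![(1:ℝ)/2, 1, 1/2]), ![![(1:ℝ),0], ![0,1], ![1,0]]) ∈ PLplus := by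
    rw [hQ]; apply memQ
    · intro i; fin_cases i <;> norm_num
    · norm_num [Matrix.cons_val_two, Matrix.tail_cons, Matrix.head_cons]
  have hv3 : ((![(2:ℝ), 0, 2], ![(1:ℝ)/2, 0, 1/2]), ![![(0:ℝ),1], ![0,0], ![0,1]]) ∈ PLplus := by
    rw [hQ]; apply memQ
    · intro i; fin_cases i <;> norm_num
    · norm_num [Matrix.cons_val_two, Matrix.tail_cons, Matrix.head_cons]
  have hmid1 : (1/2 : ℝ) • (((![(0:ℝ), 2, 2], ![(0:ℝ), 1, 1/2]), ![![(0:ℝ),0], ![0,1], ![0,1]]) : E2')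
      + (1/2 : ℝ) • (((![(3:ℝ), 0, 1], ![(1:ℝ), 0, 1/2]), ![![(1:ℝ),1], ![0,0], ![1,0]]) : E2')
      = ((![(3 : ℝ) / 2, 1, 3 / 2], ![(1 : ℝ) / 2, 1 / 2, 1 / 2]),
        ![![(1:ℝ)/2, 1/2], ![0, 1/2], ![1/2, 1/2]]) := by
    refine Prod.ext (Prod.ext ?_ ?_) ?_
    · funext i; fin_cases i <;> norm_num
    · funext i; fin_cases i <;> norm_num
    · funext i j; fin_cases i <;> fin_cases j <;> norm_num
  have hmid2 : (1/2 : ℝ) • (((![(1:ℝ), 0, 3], ![(1:ℝ)/2, 0, 1]), ![![(1:ℝ),0], ![0,0], ![1,1]]) : E2')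
      + (1/2 : ℝ) • (((![(2:ℝ), 2, 0], ![(1:ℝ)/2, 1, 0]), ![![(0:ℝ),1], ![0,1], ![0,0]]) : E2')
      = ((![(3 : ℝ) / 2, 1, 3 / 2], ![(1 : ℝ) / 2, 1 / 2, 1 / 2]),
        ![![(1:ℝ)/2, 1/2], ![0, 1/2], ![1/2, 1/2]]) := by
    refine Prod.ext (Prod.ext ?_ ?_) ?_
    · funext i; fin_cases i <;> norm_num
    · funext i; fin_cases i <;> norm_num
    · funext i j; fin_cases i <;> fin_cases j <;> norm_num
  have hmid3 : (1/2 : ℝ) • (((![(1:ℝ), 2, 1], ![(1:ℝ)/2, 1, 1/2]), ![![(1:ℝ),0], ![0,1], ![1,0]]) : E2')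
      + (1/2 : ℝ) • (((![(2:ℝ), 0, 2], ![(1:ℝ)/2, 0, 1/2]), ![![(0:ℝ),1], ![0,0], ![0,1]]) : E2')
      = ((![(3 : ℝ) / 2, 1, 3 / 2], ![(1 : ℝ) / 2, 1 / 2, 1 / 2]),
        ![![(1:ℝ)/2, 1/2], ![0, 1/2], ![1/2, 1/2]]) := by
    refine Prod.ext (Prod.ext ?_ ?_) ?_
    · funext i; fin_cases i <;> norm_num
    · funext i; fin_cases i <;> norm_num
    · funext i j; fin_cases i <;> fin_cases j <;> norm_num
  refine ⟨((![(3 : ℝ) / 2, 1, 3 / 2], ![(1 : ℝ) / 2, 1 / 2, 1 / 2]),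
    ![![(1:ℝ)/2, 1/2], ![0, 1/2], ![1/2, 1/2]]), ?_, rfl⟩
  refine Set.mem_iInter₂.2 fun f hf => Set.mem_iInter.2 fun c => ?_
  obtain ⟨a, b, cc, rfl⟩ := hf
  set pt : E2' := ((![(3 : ℝ) / 2, 1, 3 / 2], ![(1 : ℝ) / 2, 1 / 2, 1 / 2]),
    ![![(1:ℝ)/2, 1/2], ![0, 1/2], ![1/2, 1/2]]) with hpt
  by_cases hS : (c : ℝ) < ((∑ i, (a i : ℝ) * pt.1.1 i) + (∑ i, (b i : ℝ) * pt.1.2 i) +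
      ∑ i, ∑ j, (cc i j : ℝ) * pt.2 i j) ∧
      ((∑ i, (a i : ℝ) * pt.1.1 i) + (∑ i, (b i : ℝ) * pt.1.2 i) +
      ∑ i, ∑ j, (cc i j : ℝ) * pt.2 i j) < c + 1
  case neg => exact subset_convexHull ℝ _ ⟨hpmem, hS⟩
  obtain ⟨hc, hc1⟩ := hS
  rcases Int.even_or_odd (b 2) with ⟨t, ht⟩ | hb2
  · refine seg_helper hu1 hv1 hmid1
      (m₁ := 2*(a 1)+2*(a 2)+(b 1)+t+(cc 1 1)+(cc 2 1))
      (m₂ := 3*(a 0)+(a 2)+(b 0)+t+(cc 0 0)+(cc 0 1)+(cc 2 0)) ?_ ?_ ?_ hc hc1 <;>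
    · simp only [hpt, Fin.sum_univ_three, Fin.sum_univ_two,
        Matrix.cons_val_zero, Matrix.cons_val_one, Matrix.head_cons,
        Matrix.cons_val_two, Matrix.tail_cons]
      push_cast [ht]
      ring
  · rcases Int.even_or_odd (b 0) with ⟨t, ht⟩ | hb0
    · refine seg_helper hu2 hv2 hmid2
        (m₁ := (a 0)+3*(a 2)+t+(b 2)+(cc 0 0)+(cc 2 0)+(cc 2 1))
        (m₂ := 2*(a 0)+2*(a 1)+t+(b 1)+(cc 0 1)+(cc 1 1)) ?_ ?_ ?_ hc hc1 <;>
      · simp only [hpt, Fin.sum_univ_three, Fin.sum_univ_two,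
          Matrix.cons_val_zero, Matrix.cons_val_one, Matrix.head_cons,
          Matrix.cons_val_two, Matrix.tail_cons]
        push_cast [ht]
        ring
    · obtain ⟨s, hs⟩ := hb0
      obtain ⟨r, hr⟩ := hb2
      refine seg_helper hu3 hv3 hmid3
        (m₁ := (a 0)+2*(a 1)+(a 2)+(s+r+1)+(b 1)+(cc 0 0)+(cc 1 1)+(cc 2 0))
        (m₂ := 2*(a 0)+2*(a 2)+(s+r+1)+(cc 0 1)+(cc 2 1)) ?_ ?_ ?_ hc hc1 <;>
      · simp only [hpt, Fin.sum_univ_three, Fin.sum_univ_two,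
          Matrix.cons_val_zero, Matrix.cons_val_one, Matrix.head_cons,
          Matrix.cons_val_two, Matrix.tail_cons]
        push_cast [hs, hr]
        ring

lemma aux1 (P : Set ((Fin 3 → ℝ) × (Fin 3 → ℝ)))
    (hP : P = {xy | (∀ i, 0 ≤ xy.1 i ∧ xy.1 i ≤ 3) ∧ (∀ i, 0 ≤ xy.2 i ∧ xy.2 i ≤ 1) ∧
      (∑ i, xy.1 i) = 4 ∧ ∀ i, xy.1 i ≤ 4 * xy.2 i})
    (PU : Set (((Fin 3 → ℝ) × (Fin 3 → ℝ)) × (Fin 3 → Fin 3 → ℝ)))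
    (hPU : PU = {p | p.1 ∈ P ∧ ∀ i,
      (∀ j, 0 ≤ p.2 i j ∧ p.2 i j ≤ 1) ∧
      p.1.1 i = p.2 i 0 + 2 * p.2 i 1 + 3 * p.2 i 2 ∧
      p.2 i 0 + p.2 i 1 + p.2 i 2 ≤ 1})
    (PLplus : Set (((Fin 3 → ℝ) × (Fin 3 → ℝ)) × (Fin 3 → Fin 2 → ℝ)))
    (hPLplus : PLplus = {p | p.1 ∈ P ∧ ∀ i,
      (∀ j, 0 ≤ p.2 i j ∧ p.2 i j ≤ 1) ∧
      p.1.1 i = p.2 i 0 + 2 * p.2 i 1}) :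
    Prod.fst '' splitClosure (splitsFull 3) PU ⊆
      Prod.fst '' splitClosure (splitsFull 2) PLplus := by
  rintro xy ⟨p, hp, rfl⟩
  refine ⟨Tmap p, ?_, rfl⟩
  refine Set.mem_iInter₂.2 fun f hf => Set.mem_iInter.2 fun c => ?_
  obtain ⟨a, b, cc, rfl⟩ := hf
  set c' : Fin 3 → Fin 3 → ℤ := fun i => ![cc i 0, cc i 1, cc i 0 + cc i 1] with hc'
  set g : E3' → ℝ := fun p =>
    (∑ i, (a i : ℝ) * p.1.1 i) + (∑ i, (b i : ℝ) * p.1.2 i) +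
      ∑ i, ∑ j, (c' i j : ℝ) * p.2 i j with hg
  have hcomp : ∀ q : E3',
      ((∑ i, (a i : ℝ) * (Tmap q).1.1 i) + (∑ i, (b i : ℝ) * (Tmap q).1.2 i) +
        ∑ i, ∑ j, (cc i j : ℝ) * (Tmap q).2 i j) = g q := by
    intro q
    simp only [hg, hc', Tmap, Fin.sum_univ_two, Fin.sum_univ_three,
      Matrix.cons_val_zero, Matrix.cons_val_one, Matrix.head_cons, Matrix.cons_val_two,
      Matrix.tail_cons]
    push_cast
    ring
  have hp' := Set.mem_iInter.1 (Set.mem_iInter₂.1 hp g ⟨a, b, c', hg⟩) c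
  have himg : (PU \ {x | (c:ℝ) < g x ∧ g x < c + 1}) ⊆
      Tmap ⁻¹' (PLplus \ {x | (c:ℝ) <
        (∑ i, (a i : ℝ) * x.1.1 i) + (∑ i, (b i : ℝ) * x.1.2 i) +
          ∑ i, ∑ j, (cc i j : ℝ) * x.2 i j ∧
        (∑ i, (a i : ℝ) * x.1.1 i) + (∑ i, (b i : ℝ) * x.1.2 i) +
          ∑ i, ∑ j, (cc i j : ℝ) * x.2 i j < c + 1}) := by
    rintro q ⟨hq, hqS⟩
    rw [hPU] at hq
    obtain ⟨hq1, hq2⟩ := hq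
    constructor
    · rw [hPLplus]
      refine ⟨hq1, fun i => ?_⟩
      obtain ⟨hz, hxe, hs⟩ := hq2 i
      have z0 := (hz 0).1; have z1 := (hz 1).1; have z2 := (hz 2).1
      refine ⟨fun j => ?_, ?_⟩
      · fin_cases j <;> simp [Tmap] <;> constructor <;> linarith
      · simp [Tmap]; linarith
    · intro hmem
      rw [Set.mem_setOf_eq, hcomp q] at hmem
      exact hqS hmem
  have step : PU \ {x | (c:ℝ) < g x ∧ g x < c + 1} ⊆
      Tmap ⁻¹' (convexHull ℝ (PLplus \ {x | (c:ℝ) <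
        (∑ i, (a i : ℝ) * x.1.1 i) + (∑ i, (b i : ℝ) * x.1.2 i) +
          ∑ i, ∑ j, (cc i j : ℝ) * x.2 i j ∧
        (∑ i, (a i : ℝ) * x.1.1 i) + (∑ i, (b i : ℝ) * x.1.2 i) +
          ∑ i, ∑ j, (cc i j : ℝ) * x.2 i j < c + 1})) :=
    fun q hq => subset_convexHull ℝ _ (himg hq)
  exact convexHull_min step ((convex_convexHull ℝ _).is_linear_preimage Tlin) hp'

/-- Let `P = {(x,y) ∈ [0,3]³ × [0,1]³ : x₁+x₂+x₃ = 4, x_i ≤ 4y_i}`,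
let `P_U` be its unary binary extended formulation and `P_{L+}` its (perfect)
logarithmic binary extended formulation.  Then
`proj_{x,y}(SC(P_U)) ⊊ proj_{x,y}(SC(P_{L+}))`; in particular
`((3/2,1,3/2),(1/2,1/2,1/2))` belongs to `proj_{x,y}(SC(P_{L+}))` but not to
`proj_{x,y}(SC(P_U))`, since `y₁+y₂+y₃ ≥ 2` is valid for `SC(P_U)`. -/
theorem stmt12 (P : Set ((Fin 3 → ℝ) × (Fin 3 → ℝ)))
    (hP : P = {xy | (∀ i, 0 ≤ xy.1 i ∧ xy.1 i ≤ 3) ∧ (∀ i, 0 ≤ xy.2 i ∧ xy.2 i ≤ 1) ∧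
      (∑ i, xy.1 i) = 4 ∧ ∀ i, xy.1 i ≤ 4 * xy.2 i})
    (PU : Set (((Fin 3 → ℝ) × (Fin 3 → ℝ)) × (Fin 3 → Fin 3 → ℝ)))
    (hPU : PU = {p | p.1 ∈ P ∧ ∀ i,
      (∀ j, 0 ≤ p.2 i j ∧ p.2 i j ≤ 1) ∧
      p.1.1 i = p.2 i 0 + 2 * p.2 i 1 + 3 * p.2 i 2 ∧
      p.2 i 0 + p.2 i 1 + p.2 i 2 ≤ 1})
    (PLplus : Set (((Fin 3 → ℝ) × (Fin 3 → ℝ)) × (Fin 3 → Fin 2 → ℝ)))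
    (hPLplus : PLplus = {p | p.1 ∈ P ∧ ∀ i,
      (∀ j, 0 ≤ p.2 i j ∧ p.2 i j ≤ 1) ∧
      p.1.1 i = p.2 i 0 + 2 * p.2 i 1}) :
    Prod.fst '' splitClosure (splitsFull 3) PU ⊂
      Prod.fst '' splitClosure (splitsFull 2) PLplus ∧
    (![(3 : ℝ) / 2, 1, 3 / 2], ![(1 : ℝ) / 2, 1 / 2, 1 / 2]) ∈
      Prod.fst '' splitClosure (splitsFull 2) PLplus ∧
    (![(3 : ℝ) / 2, 1, 3 / 2], ![(1 : ℝ) / 2, 1 / 2, 1 / 2]) ∉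
      Prod.fst '' splitClosure (splitsFull 3) PU ∧
    (∀ p ∈ splitClosure (splitsFull 3) PU, 2 ≤ ∑ i, p.1.2 i) := by
  have key4 := aux4 P hP PU hPU
  have key2 := aux2 P hP PLplus hPLplus
  have key3 : (![(3 : ℝ) / 2, 1, 3 / 2], ![(1 : ℝ) / 2, 1 / 2, 1 / 2]) ∉
      Prod.fst '' splitClosure (splitsFull 3) PU := by
    rintro ⟨p, hp, hfst⟩
    have h2 := key4 p hp
    have hy : p.1.2 = ![(1 : ℝ) / 2, 1 / 2, 1 / 2] := congrArg Prod.snd hfst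
    rw [hy, Fin.sum_univ_three] at h2
    norm_num [Matrix.cons_val_two, Matrix.tail_cons, Matrix.head_cons] at h2
  have hsub := aux1 P hP PU hPU PLplus hPLplus
  refine ⟨?_, key2, key3, key4⟩
  rw [Set.ssubset_def]
  exact ⟨hsub, fun h => key3 (h key2)⟩
end

section
/- Let P = {x ∈ ℝ^n : Ax ≤ b, 0 ≤ x_i ≤ u_i for i ∈ I} be a rational polytope with I = {1,…,l}, let ℬ = (B^1,…,B^l) be a binarization scheme, and let z₁ ∈ ℝ^{q₁} denote the block of binarization variables associated with x₁. For any split set S = {(x,z) ∈ ℝ^{n+q} : π₀ < π·z₁ < π₀ + 1} with π ∈ ℤ^{q₁} and π₀ ∈ ℤ, there exists an integer s ∈ {0,…,u₁} such that, setting S′ = {x ∈ ℝ^n : s < x₁ < s + 1}, one has proj_x(P_ℬ \ S) ⊇ P \ S′. -/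
open Set

/-- A rational polytope in `ℝ × ℝ^q`: the convex hull of finitely many rational points. -/
def IsRatPolytopeBin (q : ℕ) (B : Set (ℝ × (Fin q → ℝ))) : Prop :=
  ∃ V : Finset (ℝ × (Fin q → ℝ)),
    (∀ p ∈ V, (∃ r : ℚ, p.1 = (r : ℝ)) ∧ ∀ j, ∃ r : ℚ, p.2 j = (r : ℝ)) ∧
    B = convexHull ℝ (V : Set (ℝ × (Fin q → ℝ)))

/-- `B ∈ Γ^q_u`: a binarization polytope for a variable `x ∈ {0,…,u}` using `q` binary
variables: a rational polytope contained in `[0,u] × [0,1]^q` whose set of 0-1 points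
projects (in the `x` coordinate) exactly onto `{0,1,…,u}`. -/
def IsBinPoly (u q : ℕ) (B : Set (ℝ × (Fin q → ℝ))) : Prop :=
  IsRatPolytopeBin q B ∧
  (∀ p ∈ B, 0 ≤ p.1 ∧ p.1 ≤ (u : ℝ) ∧ ∀ j, 0 ≤ p.2 j ∧ p.2 j ≤ 1) ∧
  Prod.fst '' (B ∩ {p | ∀ j, p.2 j = 0 ∨ p.2 j = 1}) = {x : ℝ | ∃ k : ℕ, k ≤ u ∧ x = (k : ℝ)}

/-- A unimodular binarization polytope `B ∈ Γ^u_u`: a perfect binarization polytope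
`B = conv{(j, w^j) : j = 0,…,u}` with `w^j ∈ {0,1}^u` such that the `u × u` matrix
with columns `w^j - w^0`, `j = 1,…,u`, is unimodular (integral with determinant `±1`). -/
def IsUnimodularBin (u : ℕ) (B : Set (ℝ × (Fin u → ℝ))) : Prop :=
  IsBinPoly u u B ∧
  ∃ w : Fin (u + 1) → Fin u → ℝ,
    (∀ j i, w j i = 0 ∨ w j i = 1) ∧
    B = convexHull ℝ {p : ℝ × (Fin u → ℝ) | ∃ j : Fin (u + 1), p = (((j : ℕ) : ℝ), w j)} ∧
    ∃ N : Matrix (Fin u) (Fin u) ℤ,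
      (∀ i j : Fin u, (N i j : ℝ) = w j.succ i - w 0 i) ∧ (N.det = 1 ∨ N.det = -1)

/-- The binary extended formulation `P_ℬ ⊆ ℝ^n × ℝ^{q₁} × ⋯ × ℝ^{q_l}` associated with a
binarization scheme `ℬ = (B^1,…,B^l)`: the set of `(x,z)` with `x ∈ P` and
`(x_i, z_i) ∈ B^i` for each `i ∈ I = {1,…,l}`. -/
def extForm {n l : ℕ} (hln : l ≤ n) {q : Fin l → ℕ} (P : Set (Fin n → ℝ))
    (B : (i : Fin l) → Set (ℝ × (Fin (q i) → ℝ))) :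
    Set ((Fin n → ℝ) × ((i : Fin l) → Fin (q i) → ℝ)) :=
  {p | p.1 ∈ P ∧ ∀ i : Fin l, (p.1 (Fin.castLE hln i), p.2 i) ∈ B i}

/-- The family of split functionals on the extended space corresponding to the index set
`I_ℬ = {1,…,l} ∪ {n+1,…,n+q}`: integer coefficients on `x_1,…,x_l` and on all of the
binarization variables `z`, zero coefficients on `x_{l+1},…,x_n`. -/
def extSplits (n l : ℕ) (hln : l ≤ n) (q : Fin l → ℕ) :
    Set (((Fin n → ℝ) × ((i : Fin l) → Fin (q i) → ℝ)) → ℝ) :=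
  {f | ∃ (π : Fin l → ℤ) (c : (i : Fin l) → Fin (q i) → ℤ),
    f = fun p => (∑ i, (π i : ℝ) * p.1 (Fin.castLE hln i)) +
      ∑ i, ∑ j, (c i j : ℝ) * p.2 i j}

def BadAt (Low : ℕ → Prop) (u k : ℕ) : Prop :=
  ((∀ j ≤ k, Low j) ∧ ∀ j', k < j' → j' ≤ u → ¬Low j') ∨
  ((∀ j ≤ k, ¬Low j) ∧ ∀ j', k < j' → j' ≤ u → Low j')

lemma badAt_lt_absurd {Low : ℕ → Prop} {u k k' : ℕ} (hlt : k < k') (h'u : k' < u)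
    (hb : BadAt Low u k) (hb' : BadAt Low u k') : False := by
  rcases hb with ⟨hA, hB⟩ | ⟨hA, hB⟩ <;> rcases hb' with ⟨hA', hB'⟩ | ⟨hA', hB'⟩ <;>
    first
    | exact hB (k+1) (by omega) (by omega) (hA' (k+1) (by omega))
    | exact hA' 0 (by omega) (hA 0 (by omega))
    | exact hA 0 (by omega) (hA' 0 (by omega))
    | exact hA' (k+1) (by omega) (hB (k+1) (by omega) (by omega))

lemma badAt_unique {Low : ℕ → Prop} {u k k' : ℕ} (h : k < u) (h' : k' < u)
    (hb : BadAt Low u k) (hb' : BadAt Low u k') : k = k' := by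
  rcases lt_trichotomy k k' with hlt | he | hlt
  · exact absurd (badAt_lt_absurd hlt h' hb hb') id
  · exact he
  · exact absurd (badAt_lt_absurd hlt h hb' hb) id

lemma pair_of_not_bad {Low : ℕ → Prop} {u k : ℕ} (hk : k < u) (hnb : ¬ BadAt Low u k) :
    ∃ j j', j ≤ k ∧ k + 1 ≤ j' ∧ j' ≤ u ∧ (Low j ↔ Low j') := by
  by_cases hD : ∃ j ≤ k, Low j
  · obtain ⟨j, hj, hLj⟩ := hD
    by_cases hC : ∃ j', k < j' ∧ j' ≤ u ∧ Low j'
    · obtain ⟨j', hj'1, hj'2, hLj'⟩ := hC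
      exact ⟨j, j', hj, by omega, hj'2, iff_of_true hLj hLj'⟩
    · push_neg at hC
      have hB : ∀ j', k < j' → j' ≤ u → ¬Low j' := hC
      have hnA : ¬ ∀ j ≤ k, Low j := fun hA => hnb (Or.inl ⟨hA, hB⟩)
      push_neg at hnA
      obtain ⟨j₀, hj₀, hLj₀⟩ := hnA
      exact ⟨j₀, k+1, hj₀, le_refl _, by omega,
        iff_of_false hLj₀ (hB (k+1) (by omega) (by omega))⟩
  · push_neg at hD
    by_cases hC : ∃ j', k < j' ∧ j' ≤ u ∧ ¬Low j'
    · obtain ⟨j', hj'1, hj'2, hLj'⟩ := hC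
      exact ⟨k, j', le_refl _, by omega, hj'2, iff_of_false (hD k (le_refl _)) hLj'⟩
    · push_neg at hC
      exact absurd (Or.inr ⟨hD, hC⟩) hnb

lemma seg_mem {q : ℕ} {B : Set (ℝ × (Fin q → ℝ))} (hB : Convex ℝ B)
    {c d x : ℝ} {z z' : Fin q → ℝ} (h1 : (c, z) ∈ B) (h2 : (d, z') ∈ B)
    (hx1 : c ≤ x) (hx2 : x ≤ d) :
    ∃ t : ℝ, 0 ≤ t ∧ t ≤ 1 ∧ x = t * c + (1 - t) * d ∧
      (x, fun j => t * z j + (1 - t) * z' j) ∈ B := by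
  rcases eq_or_lt_of_le (le_trans hx1 hx2) with he | hcd
  · refine ⟨1, zero_le_one, le_refl _, by linarith [le_antisymm hx2 (he ▸ hx1)], ?_⟩
    have hx : x = c := le_antisymm (he ▸ hx2) hx1
    have : (x, fun j => 1 * z j + (1 - 1) * z' j) = (c, z) := by
      refine Prod.ext hx (funext fun j => by ring)
    rw [this]; exact h1
  · set t : ℝ := (d - x) / (d - c) with ht
    have hdc : (0:ℝ) < d - c := by linarith
    have ht0 : 0 ≤ t := div_nonneg (by linarith) (by linarith)
    have ht1 : t ≤ 1 := by rw [div_le_one hdc]; linarith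
    have hcan : t * (d - c) = d - x := div_mul_cancel₀ _ hdc.ne'
    have hxe : x = t * c + (1 - t) * d := by nlinarith [hcan]
    refine ⟨t, ht0, ht1, hxe, ?_⟩
    have hmem := hB h1 h2 (b := 1 - t) ht0 (by linarith) (by ring)
    have : t • ((c, z) : ℝ × (Fin q → ℝ)) + (1 - t) • (d, z')
        = (x, fun j => t * z j + (1 - t) * z' j) := by
      refine Prod.ext ?_ ?_
      · simp [smul_eq_mul]; linarith [hxe]
      · funext j; simp [Prod.smul_def, smul_eq_mul]
    rw [← this]; exact hmem

lemma sum_comb {q : ℕ} (π : Fin q → ℤ) (t : ℝ) (z z' : Fin q → ℝ) :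
    ∑ j, (π j : ℝ) * (t * z j + (1 - t) * z' j)
      = t * ∑ j, (π j : ℝ) * z j + (1 - t) * ∑ j, (π j : ℝ) * z' j := by
  rw [Finset.mul_sum, Finset.mul_sum, ← Finset.sum_add_distrib]
  exact Finset.sum_congr rfl fun j _ => by ring

lemma int_val {q : ℕ} (π : Fin q → ℤ) (z : Fin q → ℝ) (hz : ∀ j, z j = 0 ∨ z j = 1) :
    ((∑ j, π j * round (z j) : ℤ) : ℝ) = ∑ j, (π j : ℝ) * z j := by
  push_cast
  refine Finset.sum_congr rfl fun j _ => ?_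
  rcases hz j with h | h <;> simp [h]

lemma floor_facts {t : ℝ} (h0 : 0 ≤ t) :
    ((⌊t⌋.toNat : ℕ) : ℝ) ≤ t ∧ t < ((⌊t⌋.toNat : ℕ) : ℝ) + 1 := by
  have h : ((⌊t⌋.toNat : ℤ)) = ⌊t⌋ := Int.toNat_of_nonneg (Int.floor_nonneg.2 h0)
  have hc : ((⌊t⌋.toNat : ℕ) : ℝ) = ((⌊t⌋ : ℤ) : ℝ) := by exact_mod_cast h
  exact ⟨hc ▸ Int.floor_le t, hc ▸ Int.lt_floor_add_one t⟩

lemma exists_lift {u0 q0 : ℕ} {B0 : Set (ℝ × (Fin q0 → ℝ))} (hconv : Convex ℝ B0)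
    (hpt : ∀ k : ℕ, k ≤ u0 → ∃ z, ((k : ℝ), z) ∈ B0)
    {t : ℝ} (h0 : 0 ≤ t) (h1 : t ≤ (u0 : ℝ)) : ∃ z, (t, z) ∈ B0 := by
  obtain ⟨hfl, hlt⟩ := floor_facts h0
  set k : ℕ := ⌊t⌋.toNat with hk
  by_cases hku : k < u0
  · obtain ⟨z1, hz1⟩ := hpt k (by omega)
    obtain ⟨z2, hz2⟩ := hpt (k+1) hku
    obtain ⟨θ, -, -, -, hmem⟩ := seg_mem hconv hz1 hz2 hfl (by push_cast; linarith)
    exact ⟨_, hmem⟩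
  · have hk1 : (u0 : ℝ) ≤ (k : ℝ) := by exact_mod_cast Nat.le_of_not_lt hku
    have ht : t = (u0 : ℝ) := le_antisymm h1 (by linarith)
    obtain ⟨z, hz⟩ := hpt u0 (le_refl _)
    exact ⟨z, ht ▸ hz⟩

lemma coord0 {q0 u0 : ℕ} {B0 : Set (ℝ × (Fin q0 → ℝ))} (hconv : Convex ℝ B0)
    (zz : ℕ → Fin q0 → ℝ) (hzz : ∀ k, k ≤ u0 → ((k : ℝ), zz k) ∈ B0)
    (a : ℕ → ℤ) (π : Fin q0 → ℤ) (π₀ : ℤ)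
    (haval : ∀ k, k ≤ u0 → ((a k : ℤ) : ℝ) = ∑ j, (π j : ℝ) * zz k j)
    (s : ℕ)
    (hsbad : ∀ k, k < u0 → BadAt (fun k => a k ≤ π₀) u0 k → k = s)
    {t : ℝ} (ht0 : 0 ≤ t) (ht1 : t ≤ (u0 : ℝ)) (hts : ¬((s : ℝ) < t ∧ t < (s : ℝ) + 1)) :
    ∃ z, (t, z) ∈ B0 ∧
      (∑ j, (π j : ℝ) * z j ≤ (π₀ : ℝ) ∨ (π₀ : ℝ) + 1 ≤ ∑ j, (π j : ℝ) * z j) := by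
  obtain ⟨hfl, hlt⟩ := floor_facts ht0
  set k : ℕ := ⌊t⌋.toNat with hk
  by_cases hint : t = (k : ℝ)
  · have hku : k ≤ u0 := by exact_mod_cast hint ▸ ht1
    refine ⟨zz k, hint ▸ hzz k hku, ?_⟩
    rw [← haval k hku]
    rcases le_or_gt (a k) π₀ with h | h
    · exact Or.inl (by exact_mod_cast h)
    · refine Or.inr ?_
      have : π₀ + 1 ≤ a k := h
      exact_mod_cast this
  · have hflt : (k : ℝ) < t := lt_of_le_of_ne hfl (fun h => hint h.symm)
    have hku : k < u0 := by exact_mod_cast lt_of_lt_of_le hflt ht1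
    have hks : k ≠ s := by
      intro he
      exact hts ⟨he ▸ hflt, he ▸ hlt⟩
    have hnb : ¬ BadAt (fun k => a k ≤ π₀) u0 k := fun hbad => hks (hsbad k hku hbad)
    obtain ⟨j1, j2, hj1, hj2, hj2u, hiff⟩ := pair_of_not_bad hku hnb
    have hc1 : ((j1 : ℕ) : ℝ) ≤ t := le_trans (by exact_mod_cast hj1) hfl
    have hc2 : t ≤ ((j2 : ℕ) : ℝ) := by
      have : ((k : ℕ) : ℝ) + 1 ≤ (j2 : ℝ) := by exact_mod_cast hj2
      linarith
    obtain ⟨θ, hθ0, hθ1, -, hmem⟩ :=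
      seg_mem hconv (hzz j1 (by omega)) (hzz j2 hj2u) hc1 hc2
    refine ⟨_, hmem, ?_⟩
    rw [sum_comb, ← haval j1 (by omega), ← haval j2 hj2u]
    by_cases hLj : a j1 ≤ π₀
    · have h2' : a j2 ≤ π₀ := hiff.mp hLj
      have h1 : (a j1 : ℝ) ≤ (π₀ : ℝ) := by exact_mod_cast hLj
      have h2 : (a j2 : ℝ) ≤ (π₀ : ℝ) := by exact_mod_cast h2'
      exact Or.inl (by nlinarith)
    · have h2' : ¬ a j2 ≤ π₀ := fun h => hLj (hiff.mpr h)
      have h1 : (π₀ : ℝ) + 1 ≤ (a j1 : ℝ) := by exact_mod_cast Int.not_le.mp hLj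
      have h2 : (π₀ : ℝ) + 1 ≤ (a j2 : ℝ) := by exact_mod_cast Int.not_le.mp h2'
      exact Or.inr (by nlinarith)


/-- Let `P` be a rational polytope as above, `ℬ = (B^1,…,B^l)` a
binarization scheme, and `z₁` the block of binarization variables associated with `x₁`.
For any split set `S = {(x,z) : π₀ < π·z₁ < π₀+1}` in the extended space there is an
integer `s ∈ {0,…,u₁}` such that, with `S' = {x : s < x₁ < s+1}`,
`proj_x(P_ℬ \ S) ⊇ P \ S'`. -/
theorem stmt13 (n l m : ℕ) (hl : 0 < l) (hln : l ≤ n)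
    (A : Fin m → Fin n → ℚ) (b : Fin m → ℚ) (u : Fin l → ℕ) (hu : ∀ i, 0 < u i)
    (P : Set (Fin n → ℝ))
    (hP : P = {x | (∀ r, ∑ j, (A r j : ℝ) * x j ≤ (b r : ℝ)) ∧
      ∀ i : Fin l, 0 ≤ x (Fin.castLE hln i) ∧ x (Fin.castLE hln i) ≤ (u i : ℝ)})
    (hPbdd : Bornology.IsBounded P)
    (q : Fin l → ℕ)
    (B : (i : Fin l) → Set (ℝ × (Fin (q i) → ℝ)))
    (hB : ∀ i, IsBinPoly (u i) (q i) (B i))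
    (π : Fin (q ⟨0, hl⟩) → ℤ) (π₀ : ℤ)
    (S : Set ((Fin n → ℝ) × ((i : Fin l) → Fin (q i) → ℝ)))
    (hS : S = {p | (π₀ : ℝ) < ∑ j, (π j : ℝ) * p.2 ⟨0, hl⟩ j ∧
      (∑ j, (π j : ℝ) * p.2 ⟨0, hl⟩ j) < π₀ + 1}) :
    ∃ s : ℕ, s ≤ u ⟨0, hl⟩ ∧
      P \ {x | (s : ℝ) < x (Fin.castLE hln ⟨0, hl⟩) ∧ x (Fin.castLE hln ⟨0, hl⟩) < s + 1}
        ⊆ Prod.fst '' (extForm hln P B \ S) := by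
  classical
  subst hS
  have hconv : ∀ i, Convex ℝ (B i) := by
    intro i
    obtain ⟨V, -, hV⟩ := (hB i).1
    rw [hV]; exact convex_convexHull ℝ _
  have hpt : ∀ i (k : ℕ), k ≤ u i → ∃ z : Fin (q i) → ℝ,
      ((k : ℝ), z) ∈ B i ∧ ∀ j, z j = 0 ∨ z j = 1 := by
    intro i k hk
    have h2 := (hB i).2.2
    have hmem : (k : ℝ) ∈ Prod.fst '' (B i ∩ {p | ∀ j, p.2 j = 0 ∨ p.2 j = 1}) := by
      rw [h2]; exact ⟨k, hk, rfl⟩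
    obtain ⟨p, ⟨hpB, hp01⟩, hpf⟩ := hmem
    refine ⟨p.2, ?_, hp01⟩
    have hp : ((k : ℝ), p.2) = p := by rw [← hpf]
    rw [hp]; exact hpB
  have h0 : ∀ k : ℕ, ∃ z : Fin (q ⟨0, hl⟩) → ℝ,
      k ≤ u ⟨0, hl⟩ → (((k : ℝ), z) ∈ B ⟨0, hl⟩ ∧ ∀ j, z j = 0 ∨ z j = 1) := by
    intro k
    by_cases h : k ≤ u ⟨0, hl⟩
    · obtain ⟨z, hz⟩ := hpt ⟨0, hl⟩ k h; exact ⟨z, fun _ => hz⟩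
    · exact ⟨fun _ => 0, fun h' => absurd h' h⟩
  choose zz hzz using h0
  set a : ℕ → ℤ := fun k => ∑ j, π j * round (zz k j) with ha
  have haval : ∀ k, k ≤ u ⟨0, hl⟩ → ((a k : ℤ) : ℝ) = ∑ j, (π j : ℝ) * zz k j :=
    fun k hk => int_val π (zz k) (hzz k hk).2
  set s : ℕ := if hex : ∃ k, k < u ⟨0, hl⟩ ∧ BadAt (fun k => a k ≤ π₀) (u ⟨0, hl⟩) k
    then hex.choose else 0 with hs
  have hsle : s ≤ u ⟨0, hl⟩ := by
    rw [hs]; split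
    · next hex => have := hex.choose_spec.1; omega
    · exact Nat.zero_le _
  have hsbad : ∀ k, k < u ⟨0, hl⟩ → BadAt (fun k => a k ≤ π₀) (u ⟨0, hl⟩) k → k = s := by
    intro k hk hbad
    have hex : ∃ k', k' < u ⟨0, hl⟩ ∧ BadAt (fun k => a k ≤ π₀) (u ⟨0, hl⟩) k' :=
      ⟨k, hk, hbad⟩
    have hse : s = hex.choose := by rw [hs, dif_pos hex]
    exact hse ▸ badAt_unique hk hex.choose_spec.1 hbad hex.choose_spec.2
  refine ⟨s, hsle, ?_⟩
  rintro x ⟨hxP, hxS'⟩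
  have hbd : ∀ i : Fin l, 0 ≤ x (Fin.castLE hln i) ∧ x (Fin.castLE hln i) ≤ (u i : ℝ) :=
    (hP ▸ hxP).2
  obtain ⟨z0, hz0B, hz0val⟩ := coord0 (hconv ⟨0, hl⟩) zz (fun k hk => (hzz k hk).1) a π π₀
    haval s hsbad (hbd ⟨0, hl⟩).1 (hbd ⟨0, hl⟩).2 (fun h => hxS' h)
  have hZ' : ∀ i, ∃ z, (x (Fin.castLE hln i), z) ∈ B i := fun i =>
    exists_lift (hconv i) (fun k hk => (hpt i k hk).imp (fun z hz => hz.1))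
      (hbd i).1 (hbd i).2
  choose Z' hZ'mem using hZ'
  set Z : (i : Fin l) → Fin (q i) → ℝ := Function.update Z' ⟨0, hl⟩ z0 with hZ
  have hZ0 : Z ⟨0, hl⟩ = z0 := Function.update_self _ _ _
  refine ⟨(x, Z), ⟨⟨hxP, ?_⟩, ?_⟩, rfl⟩
  · intro i
    show (x (Fin.castLE hln i), Z i) ∈ B i
    by_cases hii : i = ⟨0, hl⟩
    · subst hii; rw [hZ0]; exact hz0B
    · rw [hZ, Function.update_of_ne hii]; exact hZ'mem i
  · intro hSx
    simp only [Set.mem_setOf_eq] at hSx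
    have hSx' : (π₀ : ℝ) < ∑ j, (π j : ℝ) * Z ⟨0, hl⟩ j ∧
        (∑ j, (π j : ℝ) * Z ⟨0, hl⟩ j) < (π₀ : ℝ) + 1 := hSx
    rw [hZ0] at hSx'
    rcases hz0val with h | h
    · exact absurd hSx'.1 (not_lt.2 h)
    · exact absurd hSx'.2 (not_lt.2 h)
end

section
/- For n ≥ 1, let P^n = {x ∈ [0,4]^n : Σ_{i∈S} x_i + Σ_{i∉S} (4 − x_i) ≥ 1/2 for all S ⊆ {1,…,n}}, and let B°(4) = {(x,z) ∈ ℝ × [0,1]⁴ : x = z₁ + z₂ + z₃ + 4z₄, 1 ≥ z₁ ≥ z₂ ≥ z₃ ≥ 0, z₁ + z₄ ≤ 1}. Let P^n_ℬ = {(x,z) ∈ [0,4]^n × [0,1]^{4n} : x ∈ P^n, (x_i, z_i) ∈ B°(4) for i = 1,…,n} be the binary extended formulation with scheme ℬ = (B°(4),…,B°(4)). Then there exists a branch-and-bound tree with root label {(x,z) ∈ [0,4]^n × [0,1]^{4n} : (x_i,z_i) ∈ B°(4) for all i}, branching only on the binary z-variables with integer thresholds, having exactly 2^n + n leaves, whose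 leaf labels N satisfy conv(⋃_N proj_x(P^n_ℬ ∩ N)) = conv(P^n ∩ ℤ^n); i.e., it is a complete branch-and-bound tree with respect to P^n_ℬ of size 2^n + n. -/
/-!
The tree branches on `z i 0` (the paper's `z₁` of block `i`) for `i = 1, …, n` in turn, making
each branch `z i 0 ≥ 1` a leaf, and below the last branch `z i 0 ≤ 0` it splits on every
`z i 3` (the paper's `z₄`), so it has `n + 2^n` leaves. In `B°(4)`, `z₁ ≥ 1` forces
`1 ≤ x ≤ 3`, while `z₁ = 0` and `z₄ ∈ {0, 1}` force `x ∈ {0, 4}`; on the last `2^n` leaves `x`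
is thus a vertex of `[0,4]^n`, which `P^n` cuts off. Hence every leaf projects into a box
`{x ∈ [0,4]^n : 1 ≤ x i ≤ 3}`, whose vertices are integral points of `P^n`. Conversely every
integer in `[0, 4]` has a binary lift in `B°(4)`, and the leaves of any branch-and-bound tree
cover the points of the root whose branching coordinates are integral.
-/

open Set

/-- A branch-and-bound tree branching on coordinates indexed by `ι` with integer
thresholds: each internal node records the branching coordinate and threshold. -/
inductive BBTree (ι : Type) : Type where
  | leaf : BBTree ι
  | node (i : ι) (t : ℤ) (L R : BBTree ι) : BBTree ι

/-- The size of a branch-and-bound tree: its number of leaf nodes. -/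
def BBTree.size {ι : Type} : BBTree ι → ℕ
  | .leaf => 1
  | .node _ _ L R => L.size + R.size

/-- The list of leaf labels of a branch-and-bound tree, given the root label `D`:
at a node branching on coordinate `i` with threshold `t`, the left child gets
`D ∩ {y : y_i ≤ t}` and the right child gets `D ∩ {y : y_i ≥ t+1}`. -/
def BBTree.leaves {ι E : Type} (coord : ι → E → ℝ) : BBTree ι → Set E → List (Set E)
  | .leaf, D => [D]
  | .node i t L R, D =>
      BBTree.leaves coord L (D ∩ {y | coord i y ≤ (t : ℝ)}) ++
        BBTree.leaves coord R (D ∩ {y | (t : ℝ) + 1 ≤ coord i y})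

namespace BBTree

variable {ι E : Type} (coord : ι → E → ℝ)

def fullSplit : List ι → BBTree ι
  | [] => .leaf
  | c :: cs => .node c 0 (fullSplit cs) (fullSplit cs)

def leftSpine : List ι → BBTree ι → BBTree ι
  | [], T => T
  | c :: cs, T => .node c 0 (leftSpine cs T) .leaf

theorem size_fullSplit (cs : List ι) : (fullSplit cs).size = 2 ^ cs.length := by
  induction cs with
  | nil => rfl
  | cons c cs ih => simp only [fullSplit, size, ih, List.length_cons, pow_succ]; ring

theorem size_leftSpine (cs : List ι) (T : BBTree ι) :
    (leftSpine cs T).size = T.size + cs.length := by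
  induction cs with
  | nil => rfl
  | cons c cs ih => simp only [leftSpine, size, ih, List.length_cons]; ring

theorem subset_of_mem_leaves {T : BBTree ι} {D N : Set E} (hN : N ∈ T.leaves coord D) :
    N ⊆ D := by
  induction T generalizing D with
  | leaf => simp only [leaves, List.mem_singleton] at hN; exact hN.le
  | node c t L R ihL ihR =>
    simp only [leaves, List.mem_append] at hN
    rcases hN with hN | hN
    · exact (ihL hN).trans inter_subset_left
    · exact (ihR hN).trans inter_subset_left

theorem exists_mem_leaves (T : BBTree ι) {D : Set E} {p : E} (hp : p ∈ D)
    (hint : ∀ c, ∃ w : ℤ, coord c p = w) : ∃ N ∈ T.leaves coord D, p ∈ N := by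
  induction T generalizing D with
  | leaf => exact ⟨D, List.mem_singleton_self D, hp⟩
  | node c t L R ihL ihR =>
    obtain ⟨w, hw⟩ := hint c
    simp only [leaves, List.mem_append]
    rcases le_or_gt w t with hwt | hwt
    · obtain ⟨N, hN, hpN⟩ := ihL (D := D ∩ {y | coord c y ≤ t})
        ⟨hp, show coord c p ≤ t by rw [hw]; exact_mod_cast hwt⟩
      exact ⟨N, Or.inl hN, hpN⟩
    · obtain ⟨N, hN, hpN⟩ := ihR (D := D ∩ {y | (t : ℝ) + 1 ≤ coord c y})
        ⟨hp, show (t : ℝ) + 1 ≤ coord c p by rw [hw]; exact_mod_cast hwt⟩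
      exact ⟨N, Or.inr hN, hpN⟩

theorem coord_nonpos_or_one_le_of_mem_leaves_fullSplit {cs : List ι} {D N : Set E}
    (hN : N ∈ (fullSplit cs).leaves coord D) {p : E} (hp : p ∈ N) :
    ∀ c ∈ cs, coord c p ≤ 0 ∨ 1 ≤ coord c p := by
  induction cs generalizing D with
  | nil => simp
  | cons c cs ih =>
    simp only [fullSplit, leaves, List.mem_append] at hN
    rintro c' hc'
    rcases List.mem_cons.1 hc' with rfl | hc'
    · rcases hN with hN | hN
      · exact Or.inl (by exact_mod_cast (subset_of_mem_leaves coord hN hp).2)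
      · exact Or.inr (by simpa using (subset_of_mem_leaves coord hN hp).2)
    · exact hN.elim (ih · c' hc') (ih · c' hc')

theorem mem_leaves_leftSpine {cs : List ι} {T : BBTree ι} {D N : Set E}
    (hN : N ∈ (leftSpine cs T).leaves coord D) :
    (∃ c ∈ cs, ∀ p ∈ N, 1 ≤ coord c p) ∨
      N ∈ T.leaves coord (D ∩ {p | ∀ c ∈ cs, coord c p ≤ 0}) := by
  induction cs generalizing D with
  | nil => simpa [leftSpine] using hN
  | cons c cs ih =>
    simp only [leftSpine, leaves, List.mem_append, List.mem_singleton] at hN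
    rcases hN with hN | rfl
    · rcases ih hN with ⟨c', hc', hN'⟩ | hN'
      · exact Or.inl ⟨c', List.mem_cons_of_mem c hc', hN'⟩
      · refine Or.inr ?_
        convert hN' using 2
        ext p
        simp only [mem_inter_iff, mem_ofPred_eq, List.mem_cons, forall_eq_or_imp, Int.cast_zero]
        tauto
    · exact Or.inl ⟨c, List.mem_cons_self, fun p hp => by simpa using hp.2⟩

end BBTree

theorem mem_convexHull_pi_pair {ι : Type*} [Finite ι] {a b x : ι → ℝ}
    (hx : ∀ j, x j ∈ Icc (a j) (b j)) :
    x ∈ convexHull ℝ (univ.pi fun j => ({a j, b j} : Set ℝ)) := by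
  rw [convexHull_pi]
  intro j _
  show x j ∈ convexHull ℝ {a j, b j}
  rw [convexHull_pair, segment_eq_Icc ((hx j).1.trans (hx j).2)]
  exact hx j

def truncatedCube (n : ℕ) : Set (Fin n → ℝ) :=
  {x | (∀ i, 0 ≤ x i ∧ x i ≤ 4) ∧
    ∀ S : Finset (Fin n), (1 / 2 : ℝ) ≤ (∑ i ∈ S, x i) + ∑ i ∈ Sᶜ, (4 - x i)}

def altBinarization : Set (ℝ × (Fin 4 → ℝ)) :=
  {p | (∀ j, 0 ≤ p.2 j ∧ p.2 j ≤ 1) ∧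
    p.1 = p.2 0 + p.2 1 + p.2 2 + 4 * p.2 3 ∧
    p.2 1 ≤ p.2 0 ∧ p.2 2 ≤ p.2 1 ∧ p.2 0 + p.2 3 ≤ 1}

namespace truncatedCube

theorem not_forall_eq_zero_or_eq_four {n : ℕ} {x : Fin n → ℝ} (hx : x ∈ truncatedCube n) :
    ¬ ∀ i, x i = 0 ∨ x i = 4 := by
  classical
  intro h
  let S := Finset.univ.filter fun i => x i = 0
  have hS : ∑ i ∈ S, x i = 0 := Finset.sum_eq_zero fun i hi => (Finset.mem_filter.1 hi).2
  have hSc : ∑ i ∈ Sᶜ, (4 - x i) = 0 := by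
    refine Finset.sum_eq_zero fun i hi => ?_
    have hi0 : x i ≠ 0 := by simpa [S] using hi
    rw [(h i).resolve_left hi0, sub_self]
  have := hx.2 S
  rw [hS, hSc] at this
  norm_num at this

theorem mem_of_mem_Icc {n : ℕ} {x : Fin n → ℝ} (hbox : ∀ j, 0 ≤ x j ∧ x j ≤ 4) {i : Fin n}
    (hi : x i ∈ Icc 1 3) : x ∈ truncatedCube n := by
  refine ⟨hbox, fun S => ?_⟩
  have hin : 0 ≤ ∑ j ∈ S, x j := Finset.sum_nonneg fun j _ => (hbox j).1
  have hout : 0 ≤ ∑ j ∈ Sᶜ, (4 - x j) := Finset.sum_nonneg fun j _ => by linarith [(hbox j).2]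
  by_cases hiS : i ∈ S
  · linarith [hi.1, Finset.single_le_sum (fun j _ => (hbox j).1) hiS]
  · have := Finset.single_le_sum (fun j _ => by linarith [(hbox j).2] : ∀ j ∈ Sᶜ, 0 ≤ 4 - x j)
      (Finset.mem_compl.2 hiS)
    linarith [hi.2]

theorem mem_convexHull_integralPoints {n : ℕ} {x : Fin n → ℝ}
    (hbox : ∀ j, 0 ≤ x j ∧ x j ≤ 4) {i : Fin n} (hi : x i ∈ Icc 1 3) :
    x ∈ convexHull ℝ {y ∈ truncatedCube n | ∀ j, ∃ w : ℤ, y j = w} := by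
  classical
  let a : Fin n → ℤ := fun j => if j = i then 1 else 0
  let b : Fin n → ℤ := fun j => if j = i then 3 else 4
  have hx : ∀ j, x j ∈ Icc (a j : ℝ) (b j) := by
    intro j
    by_cases hj : j = i
    · subst hj; simpa [a, b] using hi
    · simpa [a, b, hj] using hbox j
  refine convexHull_mono ?_ (mem_convexHull_pi_pair hx)
  intro y hy
  have hyj : ∀ j, y j = a j ∨ y j = b j := fun j => hy j (mem_univ j)
  have hybox : ∀ j, 0 ≤ y j ∧ y j ≤ 4 := by
    intro j
    by_cases hj : j = i
    · subst hj; rcases hyj j with h | h <;> norm_num [h, a, b]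
    · rcases hyj j with h | h <;> simp [h, a, b, hj]
  refine ⟨mem_of_mem_Icc hybox (i := i) ?_, fun j => (hyj j).elim (⟨_, ·⟩) (⟨_, ·⟩)⟩
  rcases hyj i with h | h <;> simp [h, a, b]

end truncatedCube

namespace altBinarization

theorem fst_mem_Icc_of_one_le {p : ℝ × (Fin 4 → ℝ)} (hp : p ∈ altBinarization)
    (h : 1 ≤ p.2 0) : p.1 ∈ Icc 1 3 := by
  obtain ⟨hb, hx, h10, h21, h03⟩ := hp
  have := (hb 0).2; have := (hb 1).2; have := (hb 2).1; have := (hb 3).1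
  constructor <;> linarith

theorem fst_eq_zero_or_eq_four {p : ℝ × (Fin 4 → ℝ)} (hp : p ∈ altBinarization)
    (h0 : p.2 0 ≤ 0) (h3 : p.2 3 ≤ 0 ∨ 1 ≤ p.2 3) : p.1 = 0 ∨ p.1 = 4 := by
  obtain ⟨hb, hx, h10, h21, h03⟩ := hp
  have := (hb 2).1; have := (hb 3).1; have := (hb 3).2
  rcases h3 with h3 | h3
  · left; linarith
  · right; linarith

theorem exists_integral_lift {k : ℤ} (h0 : 0 ≤ k) (h4 : k ≤ 4) :
    ∃ z : Fin 4 → ℝ, ((k : ℝ), z) ∈ altBinarization ∧ ∀ j, ∃ w : ℤ, z j = w := by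
  suffices ∃ v : Fin 4 → ℤ, ((k : ℝ), fun j => (v j : ℝ)) ∈ altBinarization from
    let ⟨v, hv⟩ := this; ⟨_, hv, fun j => ⟨v j, rfl⟩⟩
  interval_cases k
  · exact ⟨![0, 0, 0, 0], fun j => by fin_cases j <;> simp, by simp⟩
  · exact ⟨![1, 0, 0, 0], fun j => by fin_cases j <;> simp, by simp⟩
  · exact ⟨![1, 1, 0, 0], fun j => by fin_cases j <;> simp, by simp; norm_num⟩
  · exact ⟨![1, 1, 1, 0], fun j => by fin_cases j <;> simp, by simp; norm_num⟩
  · exact ⟨![0, 0, 0, 1], fun j => by fin_cases j <;> simp, by simp⟩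

end altBinarization

theorem exists_integral_lift_pi {n : ℕ} {x : Fin n → ℝ} (hbox : ∀ i, 0 ≤ x i ∧ x i ≤ 4)
    (hint : ∀ i, ∃ w : ℤ, x i = w) :
    ∃ z : Fin n → Fin 4 → ℝ,
      (∀ i, (x i, z i) ∈ altBinarization) ∧ ∀ i j, ∃ w : ℤ, z i j = w := by
  have hlift : ∀ i, ∃ zi : Fin 4 → ℝ, (x i, zi) ∈ altBinarization ∧ ∀ j, ∃ w : ℤ, zi j = w := by
    intro i
    obtain ⟨k, hk⟩ := hint i
    obtain ⟨h0, h4⟩ := hbox i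
    rw [hk] at h0 h4 ⊢
    exact altBinarization.exists_integral_lift (by exact_mod_cast h0) (by exact_mod_cast h4)
  choose z hz hzint using hlift
  exact ⟨z, hz, hzint⟩

abbrev ExtSpace (n : ℕ) := (Fin n → ℝ) × (Fin n → Fin 4 → ℝ)

def zCoord (n : ℕ) : Fin n × Fin 4 → ExtSpace n → ℝ := fun ij p => p.2 ij.1 ij.2

def extendedFormulation (n : ℕ) : Set (ExtSpace n) :=
  {p | p.1 ∈ truncatedCube n ∧ ∀ i, (p.1 i, p.2 i) ∈ altBinarization}

def rootLabel (n : ℕ) : Set (ExtSpace n) :=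
  {p | (∀ i, 0 ≤ p.1 i ∧ p.1 i ≤ 4) ∧ ∀ i, (p.1 i, p.2 i) ∈ altBinarization}

def cornerTree (n : ℕ) : BBTree (Fin n × Fin 4) :=
  BBTree.leftSpine ((List.finRange n).map (·, 0))
    (BBTree.fullSplit ((List.finRange n).map (·, 3)))

theorem size_cornerTree (n : ℕ) : (cornerTree n).size = 2 ^ n + n := by
  simp [cornerTree, BBTree.size_leftSpine, BBTree.size_fullSplit]

theorem exists_fst_mem_Icc_of_mem_leaves_cornerTree {n : ℕ} {D N : Set (ExtSpace n)}
    (hN : N ∈ (cornerTree n).leaves (zCoord n) D) {p : ExtSpace n} (hpN : p ∈ N)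
    (hp : p ∈ extendedFormulation n) : ∃ i, p.1 i ∈ Icc 1 3 := by
  rcases BBTree.mem_leaves_leftSpine (zCoord n) hN with ⟨c, hc, hN1⟩ | hN'
  · obtain ⟨i, -, rfl⟩ := List.mem_map.1 hc
    exact ⟨i, altBinarization.fst_mem_Icc_of_one_le (hp.2 i) (hN1 p hpN)⟩
  · have hz0 := (BBTree.subset_of_mem_leaves _ hN' hpN).2
    have hz3 := BBTree.coord_nonpos_or_one_le_of_mem_leaves_fullSplit _ hN' hpN
    refine absurd (fun i => ?_) (truncatedCube.not_forall_eq_zero_or_eq_four hp.1)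
    exact altBinarization.fst_eq_zero_or_eq_four (hp.2 i)
      (hz0 (i, 0) (List.mem_map_of_mem (List.mem_finRange i)))
      (hz3 (i, 3) (List.mem_map_of_mem (List.mem_finRange i)))

theorem stmt14_general (n : ℕ)
    (Pn : Set (Fin n → ℝ))
    (hPn : Pn = {x | (∀ i, 0 ≤ x i ∧ x i ≤ 4) ∧
      ∀ S : Finset (Fin n), (1 / 2 : ℝ) ≤ (∑ i ∈ S, x i) + ∑ i ∈ Sᶜ, (4 - x i)})
    (Bo : Set (ℝ × (Fin 4 → ℝ)))
    (hBo : Bo = {p | (∀ j, 0 ≤ p.2 j ∧ p.2 j ≤ 1) ∧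
      p.1 = p.2 0 + p.2 1 + p.2 2 + 4 * p.2 3 ∧
      p.2 1 ≤ p.2 0 ∧ p.2 2 ≤ p.2 1 ∧ p.2 0 + p.2 3 ≤ 1})
    (PnB : Set ((Fin n → ℝ) × (Fin n → Fin 4 → ℝ)))
    (hPnB : PnB = {p | p.1 ∈ Pn ∧ ∀ i, (p.1 i, p.2 i) ∈ Bo})
    (D₀ : Set ((Fin n → ℝ) × (Fin n → Fin 4 → ℝ)))
    (hD₀ : D₀ = {p | (∀ i, 0 ≤ p.1 i ∧ p.1 i ≤ 4) ∧ ∀ i, (p.1 i, p.2 i) ∈ Bo}) :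
    ∃ T : BBTree (Fin n × Fin 4),
      T.size = 2 ^ n + n ∧
      convexHull ℝ (⋃ N ∈ T.leaves (fun ij p => p.2 ij.1 ij.2) D₀,
          Prod.fst '' (PnB ∩ N)) =
        convexHull ℝ {x ∈ Pn | ∀ i, ∃ w : ℤ, x i = (w : ℝ)} := by
  subst hPn hBo hPnB hD₀
  refine ⟨cornerTree n, size_cornerTree n, Subset.antisymm ?_ (convexHull_mono ?_)⟩
  · refine convexHull_min (iUnion₂_subset fun N hN => ?_) (convex_convexHull ℝ _)
    rintro _ ⟨p, ⟨hp, hpN⟩, rfl⟩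
    obtain ⟨i, hi⟩ := exists_fst_mem_Icc_of_mem_leaves_cornerTree hN hpN hp
    exact truncatedCube.mem_convexHull_integralPoints hp.1.1 hi
  · rintro x ⟨hx, hint⟩
    obtain ⟨z, hz, hzint⟩ := exists_integral_lift_pi hx.1 hint
    obtain ⟨N, hN, hpN⟩ := BBTree.exists_mem_leaves (zCoord n) (cornerTree n)
      (D := rootLabel n) (p := (x, z)) ⟨hx.1, hz⟩ fun c => hzint c.1 c.2
    have hp : (x, z) ∈ extendedFormulation n := ⟨hx, hz⟩
    exact mem_iUnion₂.2 ⟨N, hN, (x, z), ⟨hp, hpN⟩, rfl⟩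

/-- Let
`P^n = {x ∈ [0,4]^n : Σ_{i∈S} x_i + Σ_{i∉S}(4-x_i) ≥ 1/2 for all S}` and let
`B°(4)` be the alternative binarization polytope.  For the binary extended
formulation `P^n_ℬ` with scheme `ℬ = (B°(4),…,B°(4))` there exists a
branch-and-bound tree, branching only on the binary `z`-variables, with root label
`{(x,z) ∈ [0,4]^n × [0,1]^{4n} : (x_i,z_i) ∈ B°(4) for all i}`, having exactly
`2^n + n` leaves, which is complete with respect to `P^n_ℬ`:
`conv(⋃_N proj_x(P^n_ℬ ∩ N)) = conv(P^n ∩ ℤ^n)`. -/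
theorem stmt14 (n : ℕ) (hn : 1 ≤ n)
    (Pn : Set (Fin n → ℝ))
    (hPn : Pn = {x | (∀ i, 0 ≤ x i ∧ x i ≤ 4) ∧
      ∀ S : Finset (Fin n), (1 / 2 : ℝ) ≤ (∑ i ∈ S, x i) + ∑ i ∈ Sᶜ, (4 - x i)})
    (Bo : Set (ℝ × (Fin 4 → ℝ)))
    (hBo : Bo = {p | (∀ j, 0 ≤ p.2 j ∧ p.2 j ≤ 1) ∧
      p.1 = p.2 0 + p.2 1 + p.2 2 + 4 * p.2 3 ∧
      p.2 1 ≤ p.2 0 ∧ p.2 2 ≤ p.2 1 ∧ p.2 0 + p.2 3 ≤ 1})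
    (PnB : Set ((Fin n → ℝ) × (Fin n → Fin 4 → ℝ)))
    (hPnB : PnB = {p | p.1 ∈ Pn ∧ ∀ i, (p.1 i, p.2 i) ∈ Bo})
    (D₀ : Set ((Fin n → ℝ) × (Fin n → Fin 4 → ℝ)))
    (hD₀ : D₀ = {p | (∀ i, 0 ≤ p.1 i ∧ p.1 i ≤ 4) ∧ ∀ i, (p.1 i, p.2 i) ∈ Bo}) :
    ∃ T : BBTree (Fin n × Fin 4),
      T.size = 2 ^ n + n ∧
      convexHull ℝ (⋃ N ∈ T.leaves (fun ij p => p.2 ij.1 ij.2) D₀,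
          Prod.fst '' (PnB ∩ N)) =
        convexHull ℝ {x ∈ Pn | ∀ i, ∃ w : ℤ, x i = (w : ℝ)} :=
  stmt14_general n Pn hPn Bo hBo PnB hPnB D₀ hD₀
end

section
/- For n ≥ 1, let P^n = {x ∈ [0,4]^n : Σ_{i∈S} x_i + Σ_{i∉S} (4 − x_i) ≥ 1/2 for all S ⊆ {1,…,n}}, so that P^n ∩ ℤ^n = {0,1,2,3,4}^n \ {0,4}^n. Then every complete branch-and-bound tree for P^n — i.e., every branch-and-bound tree with root label [0,4]^n, branching on the variables x₁,…,x_n with integer thresholds, whose leaf labels N satisfy conv(P^n ∩ ℤ^n) = conv(⋃_N N ∩ P^n) — has size at least 2·2^n − 1. -/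
open Set

/-!
For `x` in the cube `[0,4]^n`, the cut value of `S` is the `ℓ₁`-distance from `x` to the vertex
that is `0` on `S` and `4` off `S`, so `P^n` is the cube with the `ℓ₁`-balls of radius `1/2` around
its vertices removed. Integer points of `P^n` are at distance at least `1` from every vertex, hence
so is their convex hull, and completeness forbids a leaf box containing a point of `P^n` at
distance exactly `1/2` from a vertex. A box with integer bounds contains such a point as soon as
each of its coordinate ranges reaches `0` or `4` and one of them is not a single point.

Give such a box the potential `K + 2^(B+1)`, where `B` counts the ranges equal to `[0,4]` and `K`
the non-degenerate ranges reaching exactly one of `0`, `4`, and give potential `2` to boxes with a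
range reaching neither. The potentials of the two children of a branching sum to at least one more
than their parent's: splitting `[0,4]` halves the `2^(B+1)` term on each side, but one side keeps
a non-degenerate range reaching an end. Leaves have potential at most `2` and the root `[0,4]^n`
has potential `2^(n+1)`, so the tree has at least `2^(n+1) - 1` leaves.
-/

open Finset Function

lemma Finset.card_filter_update {ι α : Type*} [Fintype ι] [DecidableEq ι] (f : ι → α) (i : ι) (a : α)
    (p : α → Prop) [DecidablePred p] :
    #{j | p (update f i a j)} = #{j ∈ univ.erase i | p (f j)} + if p a then 1 else 0 := by
  rw [card_filter, card_filter, ← add_sum_erase _ _ (mem_univ i), update_self, add_comm]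
  congr 1
  exact sum_congr rfl fun j hj => by rw [update_of_ne (ne_of_mem_erase hj)]

namespace CubeCornerCuts

variable {n : ℕ}

def cutValue (S : Finset (Fin n)) (x : Fin n → ℝ) : ℝ := (∑ i ∈ S, x i) + ∑ i ∈ Sᶜ, (4 - x i)

def P (n : ℕ) : Set (Fin n → ℝ) :=
  {x | (∀ i, 0 ≤ x i ∧ x i ≤ 4) ∧ ∀ S, (1 / 2 : ℝ) ≤ cutValue S x}

lemma cutValue_eq_sum (S : Finset (Fin n)) (x : Fin n → ℝ) :
    cutValue S x = ∑ i, if i ∈ S then x i else 4 - x i := by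
  rw [← sum_add_sum_compl S, cutValue]
  congr 1
  · exact sum_congr rfl fun i hi => by rw [if_pos hi]
  · exact sum_congr rfl fun i hi => by rw [if_neg (mem_compl.mp hi)]

lemma cutValue_smul_add_smul (S : Finset (Fin n)) (x y : Fin n → ℝ) {a b : ℝ} (hab : a + b = 1) :
    cutValue S (a • x + b • y) = a * cutValue S x + b * cutValue S y := by
  simp only [cutValue_eq_sum, mul_sum, ← sum_add_distrib]
  refine sum_congr rfl fun i _ => ?_
  split_ifs
  · simp
  · simp only [Pi.add_apply, Pi.smul_apply, smul_eq_mul]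
    linear_combination (-4 : ℝ) * hab

lemma le_cutValue {x : Fin n → ℝ} (hx : ∀ j, 0 ≤ x j ∧ x j ≤ 4) (S : Finset (Fin n)) (i : Fin n) :
    (if i ∈ S then x i else 4 - x i) ≤ cutValue S x := by
  rw [cutValue_eq_sum]
  refine single_le_sum (f := fun j => if j ∈ S then x j else 4 - x j) (fun j _ => ?_) (mem_univ i)
  split_ifs <;> linarith [hx j]

lemma convex_one_le_cutValue (S : Finset (Fin n)) : Convex ℝ {x | 1 ≤ cutValue S x} := by
  intro x hx y hy a b ha hb hab
  simp only [mem_ofPred_eq, cutValue_smul_add_smul S x y hab] at *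
  nlinarith

lemma one_le_cutValue_of_int {x : Fin n → ℝ} (hx : x ∈ P n) (hZ : ∀ i, ∃ w : ℤ, x i = w)
    (S : Finset (Fin n)) : 1 ≤ cutValue S x := by
  choose w hw using hZ
  obtain ⟨m, hm⟩ : ∃ m : ℤ, cutValue S x = m :=
    ⟨∑ i ∈ S, w i + ∑ i ∈ Sᶜ, (4 - w i), by simp [cutValue, hw]⟩
  have hhalf := hx.2 S
  rw [hm] at hhalf ⊢
  have : (0 : ℤ) < m := by exact_mod_cast (by linarith : (0 : ℝ) < m)
  exact_mod_cast this

lemma convexHull_intPoints_subset (S : Finset (Fin n)) :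
    convexHull ℝ {x ∈ P n | ∀ i, ∃ w : ℤ, x i = w} ⊆ {x | 1 ≤ cutValue S x} :=
  convexHull_min (fun _ hx => one_le_cutValue_of_int hx.1 hx.2 S) (convex_one_le_cutValue S)

def intBox (I : Fin n → ℤ × ℤ) : Set (Fin n → ℝ) := {x | ∀ j, ((I j).1 : ℝ) ≤ x j ∧ x j ≤ (I j).2}

lemma mem_intBox_update_iff {x : Fin n → ℝ} {I : Fin n → ℤ × ℤ} {i : Fin n} {p : ℤ × ℤ} :
    x ∈ intBox (update I i p) ↔
      ((p.1 : ℝ) ≤ x i ∧ x i ≤ p.2) ∧ ∀ j ≠ i, ((I j).1 : ℝ) ≤ x j ∧ x j ≤ (I j).2 :=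
  forall_update_iff I fun j (q : ℤ × ℤ) => (q.1 : ℝ) ≤ x j ∧ x j ≤ q.2

lemma intBox_inter_le (I : Fin n → ℤ × ℤ) (i : Fin n) (t : ℤ) :
    intBox I ∩ {y | y i ≤ t} = intBox (update I i ((I i).1, min (I i).2 t)) := by
  ext x
  conv_lhs => rw [← update_eq_self i I]
  simp only [mem_inter_iff, mem_ofPred_eq, mem_intBox_update_iff, Int.cast_min, le_min_iff]
  tauto

lemma intBox_inter_ge (I : Fin n → ℤ × ℤ) (i : Fin n) (t : ℤ) :
    intBox I ∩ {y | t + 1 ≤ y i} = intBox (update I i (max (I i).1 (t + 1), (I i).2)) := by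
  ext x
  conv_lhs => rw [← update_eq_self i I]
  simp only [mem_inter_iff, mem_ofPred_eq, mem_intBox_update_iff, Int.cast_max,
    Int.cast_add, Int.cast_one, max_le_iff]
  tauto

def InCube (I : Fin n → ℤ × ℤ) : Prop := ∀ j, 0 ≤ (I j).1 ∧ (I j).2 ≤ 4

lemma InCube.update_min {I : Fin n → ℤ × ℤ} (hI : InCube I) (i : Fin n) (t : ℤ) :
    InCube (update I i ((I i).1, min (I i).2 t)) :=
  (forall_update_iff I fun _ (p : ℤ × ℤ) => 0 ≤ p.1 ∧ p.2 ≤ 4).mpr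
    ⟨⟨(hI i).1, (min_le_left _ _).trans (hI i).2⟩, fun j _ => hI j⟩

lemma InCube.update_max {I : Fin n → ℤ × ℤ} (hI : InCube I) (i : Fin n) (t : ℤ) :
    InCube (update I i (max (I i).1 (t + 1), (I i).2)) :=
  (forall_update_iff I fun _ (p : ℤ × ℤ) => 0 ≤ p.1 ∧ p.2 ≤ 4).mpr
    ⟨⟨(hI i).1.trans (le_max_left _ _), (hI i).2⟩, fun j _ => hI j⟩

/- For an integer interval `[p.1, p.2] ⊆ [0, 4]`: `MissesEnds` says that it contains neither `0`
nor `4` (it may be empty), `ReachesOneEnd` that it contains exactly one of them and is not a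
single point, `IsFull` that it is all of `[0, 4]`. -/
def MissesEnds (p : ℤ × ℤ) : Prop := p.2 < p.1 ∨ (1 ≤ p.1 ∧ p.2 ≤ 3)

def ReachesOneEnd (p : ℤ × ℤ) : Prop :=
  (p.1 = 0 ∧ 1 ≤ p.2 ∧ p.2 ≤ 3) ∨ (1 ≤ p.1 ∧ p.1 ≤ 3 ∧ p.2 = 4)

def IsFull (p : ℤ × ℤ) : Prop := p = (0, 4)

instance : DecidablePred MissesEnds := fun _ => inferInstanceAs (Decidable (_ ∨ _))
instance : DecidablePred ReachesOneEnd := fun _ => inferInstanceAs (Decidable (_ ∨ _))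
instance : DecidablePred IsFull := fun _ => inferInstanceAs (Decidable (_ = _))

def potential (I : Fin n → ℤ × ℤ) : ℕ :=
  if ∃ j, MissesEnds (I j) then 2 else #{j | ReachesOneEnd (I j)} + 2 ^ (#{j | IsFull (I j)} + 1)

def localPotential (K B : ℕ) (p : ℤ × ℤ) : ℕ :=
  if MissesEnds p then 2
  else K + (if ReachesOneEnd p then 1 else 0) + (if IsFull p then 2 else 1) * 2 ^ (B + 1)

lemma two_le_potential (I : Fin n → ℤ × ℤ) : 2 ≤ potential I := by
  unfold potential
  split_ifs
  · rfl
  · have := Nat.one_lt_two_pow_iff.mpr (Nat.succ_ne_zero #{j | IsFull (I j)})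
    omega

lemma potential_update (I : Fin n → ℤ × ℤ) (i : Fin n) (hI : ∀ j, ¬ MissesEnds (I j)) (p : ℤ × ℤ) :
    potential (update I i p) =
      localPotential #{j ∈ univ.erase i | ReachesOneEnd (I j)} #{j ∈ univ.erase i | IsFull (I j)} p := by
  have hmiss : (∃ j, MissesEnds (update I i p j)) ↔ MissesEnds p := by
    rw [exists_update_iff]
    exact or_iff_left fun ⟨j, _, hj⟩ => hI j hj
  simp only [potential, localPotential, card_filter_update, hmiss]
  split_ifs <;> ring

lemma localPotential_branch (K B : ℕ) (p : ℤ × ℤ) (t : ℤ) (h0 : 0 ≤ p.1) (h4 : p.2 ≤ 4)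
    (hp : ¬ MissesEnds p) :
    localPotential K B p + 1 ≤
      localPotential K B (p.1, min p.2 t) + localPotential K B (max p.1 (t + 1), p.2) := by
  unfold localPotential
  split_ifs <;> simp only [MissesEnds, ReachesOneEnd, IsFull, Prod.ext_iff] at * <;> omega

lemma potential_branch (I : Fin n → ℤ × ℤ) (hI : InCube I) (i : Fin n) (t : ℤ) :
    potential I + 1 ≤ potential (update I i ((I i).1, min (I i).2 t)) +
      potential (update I i (max (I i).1 (t + 1), (I i).2)) := by
  by_cases hmiss : ∃ j, MissesEnds (I j)
  · have := two_le_potential (update I i ((I i).1, min (I i).2 t))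
    have := two_le_potential (update I i (max (I i).1 (t + 1), (I i).2))
    rw [potential, if_pos hmiss]
    omega
  · simp only [not_exists] at hmiss
    conv_lhs => rw [← update_eq_self i I]
    simp only [potential_update I i hmiss]
    exact localPotential_branch _ _ _ t (hI i).1 (hI i).2 (hmiss i)

lemma nearEnd_mem_Icc (p : ℤ × ℤ) (h0 : 0 ≤ p.1) (h4 : p.2 ≤ 4) (hp : ¬ MissesEnds p) {δ : ℝ}
    (hδ : δ = 0 ∨ (δ = 1 / 2 ∧ p.1 < p.2)) :
    (p.1 : ℝ) ≤ (if p.1 = 0 then δ else 4 - δ) ∧ (if p.1 = 0 then δ else 4 - δ) ≤ p.2 := by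
  unfold MissesEnds at hp
  have hδ' : (δ = 0 ∧ p.1 ≤ p.2) ∨ (δ = 1 / 2 ∧ p.1 + 1 ≤ p.2) := by
    rcases hδ with h | ⟨h, hlt⟩
    exacts [Or.inl ⟨h, by omega⟩, Or.inr ⟨h, hlt⟩]
  have hends : p.1 = 0 ∨ p.2 = 4 := by omega
  rify at hδ' h0 h4 hends
  split_ifs with hp0
  · have hl : (p.1 : ℝ) = 0 := by exact_mod_cast hp0
    constructor <;> rcases hδ' with ⟨rfl, h⟩ | ⟨rfl, h⟩ <;> linarith
  · have hu : (p.2 : ℝ) = 4 := hends.resolve_left (by exact_mod_cast hp0)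
    constructor <;> rcases hδ' with ⟨rfl, h⟩ | ⟨rfl, h⟩ <;> linarith

lemma exists_mem_intBox_cutValue_eq_half (I : Fin n → ℤ × ℤ) (hI : InCube I)
    (hmiss : ∀ j, ¬ MissesEnds (I j)) (i₀ : Fin n) (hi₀ : (I i₀).1 < (I i₀).2) :
    ∃ x ∈ intBox I ∩ P n, ∃ S, cutValue S x = 1 / 2 := by
  set δ : Fin n → ℝ := fun j => if j = i₀ then 1 / 2 else 0 with hδ
  set x : Fin n → ℝ := fun j => if (I j).1 = 0 then δ j else 4 - δ j with hx
  have hbox : x ∈ intBox I := fun j =>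
    nearEnd_mem_Icc (I j) (hI j).1 (hI j).2 (hmiss j) <| by
      rcases eq_or_ne j i₀ with rfl | hj
      · simp [hδ, hi₀]
      · simp [hδ, hj]
  have hcube : ∀ j, 0 ≤ x j ∧ x j ≤ 4 := fun j => by
    have := hbox j
    have := hI j
    rify at this
    constructor <;> linarith
  refine ⟨x, ⟨hbox, hcube, fun T => ?_⟩, ({j | (I j).1 = 0} : Finset _), ?_⟩
  · calc (1 / 2 : ℝ) ≤ if i₀ ∈ T then x i₀ else 4 - x i₀ := by
          simp only [hx, hδ, if_true]; split_ifs <;> norm_num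
      _ ≤ cutValue T x := le_cutValue hcube T i₀
  · rw [cutValue_eq_sum]
    calc ∑ j, (if j ∈ ({j | (I j).1 = 0} : Finset _) then x j else 4 - x j)
        = ∑ j, δ j := sum_congr rfl fun j _ => by
          simp only [hx, Finset.mem_filter_univ]; split_ifs <;> ring
      _ = 1 / 2 := by simp [hδ]

lemma potential_le_two (I : Fin n → ℤ × ℤ) (hI : InCube I)
    (hclean : intBox I ∩ P n ⊆ {x | ∀ S, 1 ≤ cutValue S x}) : potential I ≤ 2 := by
  by_cases hmiss : ∃ j, MissesEnds (I j)
  · rw [potential, if_pos hmiss]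
  have hfixed : ∀ j, (I j).1 = (I j).2 := by
    intro j
    by_contra hne
    simp only [not_exists] at hmiss
    have hlt : (I j).1 < (I j).2 := by have := hmiss j; unfold MissesEnds at this; omega
    obtain ⟨x, hx, S, hS⟩ := exists_mem_intBox_cutValue_eq_half I hI hmiss j hlt
    have := hclean hx S
    norm_num [hS] at this
  have hK : #{j | ReachesOneEnd (I j)} = 0 :=
    card_filter_eq_zero_iff.mpr fun j _ => by have := hfixed j; unfold ReachesOneEnd; omega
  have hB : #{j | IsFull (I j)} = 0 :=
    card_filter_eq_zero_iff.mpr fun j _ => by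
      have := hfixed j; unfold IsFull; rw [Prod.ext_iff]; omega
  rw [potential, if_neg hmiss, hK, hB]
  norm_num

lemma potential_le_size_add_one (T : BBTree (Fin n)) (I : Fin n → ℤ × ℤ) (hI : InCube I)
    (hclean : ∀ N ∈ T.leaves (fun i x => x i) (intBox I), N ∩ P n ⊆ {x | ∀ S, 1 ≤ cutValue S x}) :
    potential I ≤ T.size + 1 := by
  induction T generalizing I with
  | leaf => exact potential_le_two I hI (hclean _ (List.mem_singleton_self _))
  | node i t L R ihL ihR =>
    simp only [BBTree.leaves, List.mem_append, intBox_inter_le, intBox_inter_ge] at hclean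
    have hL := ihL _ (hI.update_min i t) fun N hN => hclean N (Or.inl hN)
    have hR := ihR _ (hI.update_max i t) fun N hN => hclean N (Or.inr hN)
    have := potential_branch I hI i t
    simp only [BBTree.size]
    omega

lemma potential_full : potential (fun _ : Fin n => ((0 : ℤ), (4 : ℤ))) = 2 ^ (n + 1) := by
  have hmiss : ¬ ∃ _ : Fin n, MissesEnds (0, 4) := by simp [MissesEnds]
  have hK : #{_j : Fin n | ReachesOneEnd (0, 4)} = 0 := by simp [ReachesOneEnd]
  have hB : #{_j : Fin n | IsFull (0, 4)} = n := by simp [IsFull]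
  rw [potential, if_neg hmiss, hK, hB, zero_add]

end CubeCornerCuts

open CubeCornerCuts

theorem stmt15_general (n : ℕ)
    (Pn : Set (Fin n → ℝ))
    (hPn : Pn = {x | (∀ i, 0 ≤ x i ∧ x i ≤ 4) ∧
      ∀ S : Finset (Fin n), (1 / 2 : ℝ) ≤ (∑ i ∈ S, x i) + ∑ i ∈ Sᶜ, (4 - x i)})
    (D₀ : Set (Fin n → ℝ)) (hD₀ : D₀ = {x | ∀ i, 0 ≤ x i ∧ x i ≤ 4})
    (T : BBTree (Fin n))
    (hcomplete : convexHull ℝ {x ∈ Pn | ∀ i, ∃ w : ℤ, x i = (w : ℝ)} =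
      convexHull ℝ (⋃ N ∈ T.leaves (fun i x => x i) D₀, N ∩ Pn)) :
    2 * 2 ^ n - 1 ≤ T.size := by
  have hroot : D₀ = intBox fun _ => (0, 4) := by
    rw [hD₀]; ext x; simp [intBox]
  change Pn = P n at hPn
  subst hPn hroot
  have hclean : ∀ N ∈ T.leaves (fun i x => x i) (intBox fun _ => (0, 4)),
      N ∩ P n ⊆ {x | ∀ S, 1 ≤ cutValue S x} := fun N hN x hx S =>
    convexHull_intPoints_subset S <| hcomplete ▸ subset_convexHull ℝ _ (mem_biUnion hN hx)
  have := potential_le_size_add_one T _ (fun _ => by norm_num) hclean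
  rw [potential_full, pow_succ] at this
  omega

/-- Let
`P^n = {x ∈ [0,4]^n : Σ_{i∈S} x_i + Σ_{i∉S}(4-x_i) ≥ 1/2 for all S}`, so that
`P^n ∩ ℤ^n = {0,1,2,3,4}^n \ {0,4}^n`.  Every complete branch-and-bound tree for
`P^n` — a tree with root label `[0,4]^n`, branching on the variables `x₁,…,x_n` with
integer thresholds, whose leaf labels `N` satisfy
`conv(P^n ∩ ℤ^n) = conv(⋃_N N ∩ P^n)` — has size at least `2·2^n - 1`. -/
theorem stmt15 (n : ℕ) (hn : 1 ≤ n)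
    (Pn : Set (Fin n → ℝ))
    (hPn : Pn = {x | (∀ i, 0 ≤ x i ∧ x i ≤ 4) ∧
      ∀ S : Finset (Fin n), (1 / 2 : ℝ) ≤ (∑ i ∈ S, x i) + ∑ i ∈ Sᶜ, (4 - x i)})
    (D₀ : Set (Fin n → ℝ)) (hD₀ : D₀ = {x | ∀ i, 0 ≤ x i ∧ x i ≤ 4})
    (T : BBTree (Fin n))
    (hcomplete : convexHull ℝ {x ∈ Pn | ∀ i, ∃ w : ℤ, x i = (w : ℝ)} =
      convexHull ℝ (⋃ N ∈ T.leaves (fun i x => x i) D₀, N ∩ Pn)) :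
    2 * 2 ^ n - 1 ≤ T.size :=
  stmt15_general n Pn hPn D₀ hD₀ T hcomplete
end

section
/- Let P = {x ∈ ℝ^n : Ax ≤ b, 0 ≤ x_i ≤ u_i for i ∈ I} be a rational polytope with I = {1,…,l}, and let ℬ = (B^1,…,B^l) be a binarization scheme in which each B^i is affine with integral data: every (x_i, z_i) ∈ B^i satisfies x_i = a_i·z_i + b_i with a_i ∈ ℤ^{q_i} and b_i ∈ ℤ. Then SC(P_ℬ, I_ℬ) = SC(P_ℬ, I′), where I′ = I_ℬ \ {1,…,l} consists of the indices of the binarization variables only. -/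
open Set

/-- The family of split functionals on the extended space corresponding to the index set
`I' = I_ℬ \ {1,…,l}`: integer coefficients on the binarization variables only. -/
def extSplitsZ (n l : ℕ) (q : Fin l → ℕ) :
    Set (((Fin n → ℝ) × ((i : Fin l) → Fin (q i) → ℝ)) → ℝ) :=
  {f | ∃ c : (i : Fin l) → Fin (q i) → ℤ,
    f = fun p => ∑ i, ∑ j, (c i j : ℝ) * p.2 i j}

/-!
On the extended formulation every binarized variable is an integral affine function of its
binarization variables, `x_i = a_i·z_i + β_i`. Hence a split functional `π·x_I + c·z`
coincides on `P_ℬ` with the `z`-only functional `(π a + c)·z` shifted by the integer `π·β`,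
so it defines the same disjunction as a split of `𝒮(I')` with a shifted right-hand side.
-/

theorem diff_split_eq_of_eqOn_add_int {α : Type*} {P : Set α} {f g : α → ℝ} {k : ℤ}
    (hfg : ∀ x ∈ P, f x = g x + k) (c : ℤ) :
    P \ {x | (c : ℝ) < f x ∧ f x < c + 1} =
      P \ {x | ((c - k : ℤ) : ℝ) < g x ∧ g x < (c - k : ℤ) + 1} := by
  ext x
  simp only [mem_sdiff, mem_ofPred_eq]
  refine and_congr_right fun hx => not_congr ?_
  rw [hfg x hx]
  push_cast
  constructor <;> rintro ⟨h₁, h₂⟩ <;> constructor <;> linarith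

section splitClosure

variable {E : Type*} [AddCommGroup E] [Module ℝ E] {Λ Λ' : Set (E → ℝ)} {P : Set E}

theorem splitClosure_anti (h : Λ ⊆ Λ') : splitClosure Λ' P ⊆ splitClosure Λ P :=
  biInter_subset_biInter_left h

theorem splitClosure_subset_of_forall_exists_eqOn_add_int
    (h : ∀ f ∈ Λ, ∃ g ∈ Λ', ∃ k : ℤ, ∀ x ∈ P, f x = g x + k) :
    splitClosure Λ' P ⊆ splitClosure Λ P := by
  intro p hp
  simp only [splitClosure, mem_iInter] at hp ⊢
  intro f hf c
  obtain ⟨g, hg, k, hfg⟩ := h f hf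
  rw [diff_split_eq_of_eqOn_add_int hfg c]
  exact hp g hg (c - k)

end splitClosure

theorem extSplitsZ_subset_extSplits (n l : ℕ) (hln : l ≤ n) (q : Fin l → ℕ) :
    extSplitsZ n l q ⊆ extSplits n l hln q := by
  rintro f ⟨c, rfl⟩
  exact ⟨0, c, by simp⟩

theorem exists_extSplitsZ_eqOn_extForm_add_int {n l : ℕ} (hln : l ≤ n) {q : Fin l → ℕ}
    (P : Set (Fin n → ℝ)) (B : (i : Fin l) → Set (ℝ × (Fin (q i) → ℝ)))
    (a : (i : Fin l) → Fin (q i) → ℤ) (β : Fin l → ℤ)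
    (haff : ∀ i, ∀ p ∈ B i, p.1 = (∑ j, (a i j : ℝ) * p.2 j) + (β i : ℝ)) :
    ∀ f ∈ extSplits n l hln q, ∃ g ∈ extSplitsZ n l q, ∃ k : ℤ,
      ∀ x ∈ extForm hln P B, f x = g x + k := by
  rintro f ⟨π, c, rfl⟩
  refine ⟨_, ⟨fun i j => π i * a i j + c i j, rfl⟩, ∑ i, π i * β i, fun x hx => ?_⟩
  have hxi : ∀ i, x.1 (Fin.castLE hln i) = ∑ j, (a i j : ℝ) * x.2 i j + β i :=
    fun i => haff i _ (hx.2 i)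
  simp only [hxi]
  push_cast
  simp only [mul_add, add_mul, Finset.mul_sum, Finset.sum_add_distrib, mul_assoc]
  ring

theorem stmt16_general (n l : ℕ) (hln : l ≤ n)
    (P : Set (Fin n → ℝ))
    (q : Fin l → ℕ)
    (B : (i : Fin l) → Set (ℝ × (Fin (q i) → ℝ)))
    (a : (i : Fin l) → Fin (q i) → ℤ) (β : Fin l → ℤ)
    (haff : ∀ i, ∀ p ∈ B i, p.1 = (∑ j, (a i j : ℝ) * p.2 j) + (β i : ℝ)) :
    splitClosure (extSplits n l hln q) (extForm hln P B) =
      splitClosure (extSplitsZ n l q) (extForm hln P B) :=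
  Subset.antisymm (splitClosure_anti (extSplitsZ_subset_extSplits n l hln q))
    (splitClosure_subset_of_forall_exists_eqOn_add_int
      (exists_extSplitsZ_eqOn_extForm_add_int hln P B a β haff))

/-- Let `P` be a rational polytope as above and `ℬ = (B^1,…,B^l)` a
binarization scheme in which each `B^i` is affine with integral data: every
`(x_i,z_i) ∈ B^i` satisfies `x_i = a_i·z_i + b_i` with `a_i ∈ ℤ^{q_i}`, `b_i ∈ ℤ`.
Then `SC(P_ℬ, I_ℬ) = SC(P_ℬ, I')`, where `I'` consists of the indices of the
binarization variables only. -/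
theorem stmt16 (n l m : ℕ) (hln : l ≤ n)
    (A : Fin m → Fin n → ℚ) (b : Fin m → ℚ) (u : Fin l → ℕ) (hu : ∀ i, 0 < u i)
    (P : Set (Fin n → ℝ))
    (hP : P = {x | (∀ r, ∑ j, (A r j : ℝ) * x j ≤ (b r : ℝ)) ∧
      ∀ i : Fin l, 0 ≤ x (Fin.castLE hln i) ∧ x (Fin.castLE hln i) ≤ (u i : ℝ)})
    (hPbdd : Bornology.IsBounded P)
    (q : Fin l → ℕ)
    (B : (i : Fin l) → Set (ℝ × (Fin (q i) → ℝ)))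
    (hB : ∀ i, IsBinPoly (u i) (q i) (B i))
    (a : (i : Fin l) → Fin (q i) → ℤ) (β : Fin l → ℤ)
    (haff : ∀ i, ∀ p ∈ B i, p.1 = (∑ j, (a i j : ℝ) * p.2 j) + (β i : ℝ)) :
    splitClosure (extSplits n l hln q) (extForm hln P B) =
      splitClosure (extSplitsZ n l q) (extForm hln P B) :=
  stmt16_general n l hln P q B a β haff
end

section
/- Let P = {x ∈ [0,2]² : x₂ = (1/2)x₁ + 1/2}, so that P ∩ ℤ² = {(1,1)}. Let P_ℬ = {(x, z₁, z₂) ∈ ℝ² × ℝ² × ℝ² : x ∈ P, x_i = z_{i1} + 2z_{i2}, z_{i1} + z_{i2} ≤ 1, 0 ≤ z_{i1}, z_{i2} ≤ 1 for i = 1,2} be the full binary extended formulation of P. Then, for the single split set S = {(x, z₁, z₂) : 0 < x₂ − z_{12} < 1}, one has proj_x(conv(P_ℬ \ S)) = {(1,1)} = conv(P ∩ ℤ²). -/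
/-!
On `P_ℬ` the split functional takes the value `x₂ - z₁₂ = (1 + z₁₁) / 2 ∈ [1/2, 1]`, so a point of
`P_ℬ` avoids the split only if `z₁₁ = 1`, `z₁₂ = 0`, i.e. `x = (1, 1)`. Hence `P_ℬ \ S` lies in the
affine subspace `{x = (1, 1)}`, and so does its convex hull, while `((1, 1), (1, 0), (1, 0))` shows
that the projection is not empty.
-/

open Set

theorem LinearMap.image_convexHull_eq_singleton {𝕜 E F : Type*} [Semiring 𝕜] [PartialOrder 𝕜]
    [AddCommMonoid E] [Module 𝕜 E] [AddCommMonoid F] [Module 𝕜 F]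
    (f : E →ₗ[𝕜] F) {s : Set E} {c : F} (hs : s.Nonempty) (hf : ∀ p ∈ s, f p = c) :
    f '' convexHull 𝕜 s = {c} := by
  have hfs : f '' s = {c} :=
    (eq_singleton_iff_nonempty_unique_mem).2 ⟨hs.image f, by rintro _ ⟨p, hp, rfl⟩; exact hf p hp⟩
  rw [f.image_convexHull, hfs, convexHull_singleton]

theorem eq_one_of_int_mem_line {w₁ w₂ : ℤ} (h₀ : (0 : ℝ) ≤ w₁) (h₂ : (w₁ : ℝ) ≤ 2)
    (hline : (w₂ : ℝ) = 1 / 2 * w₁ + 1 / 2) : w₁ = 1 ∧ w₂ = 1 := by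
  have h : 2 * w₂ = w₁ + 1 := by exact_mod_cast (by linarith : (2 * w₂ : ℝ) = w₁ + 1)
  have h₀' : 0 ≤ w₁ := by exact_mod_cast h₀
  have h₂' : w₁ ≤ 2 := by exact_mod_cast h₂
  omega

theorem eq_one_of_notMem_split {x₁ x₂ z₁₁ z₁₂ : ℝ} (hline : x₂ = 1 / 2 * x₁ + 1 / 2)
    (hx₁ : x₁ = z₁₁ + 2 * z₁₂) (hz₁₁ : 0 ≤ z₁₁) (hz₁₂ : 0 ≤ z₁₂) (hsum : z₁₁ + z₁₂ ≤ 1)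
    (hsplit : ¬(0 < x₂ - z₁₂ ∧ x₂ - z₁₂ < 1)) : x₁ = 1 ∧ x₂ = 1 := by
  have hval : x₂ - z₁₂ = (1 + z₁₁) / 2 := by rw [hline, hx₁]; ring
  have hge : 1 ≤ x₂ - z₁₂ := by
    by_contra! hlt
    exact hsplit ⟨by rw [hval]; linarith, hlt⟩
  constructor <;> linarith

/-- Let `P = {x ∈ [0,2]² : x₂ = x₁/2 + 1/2}`, so that
`P ∩ ℤ² = {(1,1)}`.  Let `P_ℬ` be the full binary extended formulation of `P`
(`x_i = z_{i1} + 2z_{i2}`, `z_{i1} + z_{i2} ≤ 1`, `z ∈ [0,1]⁴`).  Then for the single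
split set `S = {(x,z₁,z₂) : 0 < x₂ - z_{12} < 1}` one has
`proj_x(conv(P_ℬ \ S)) = {(1,1)} = conv(P ∩ ℤ²)`. -/
theorem stmt17 (P : Set (ℝ × ℝ))
    (hP : P = {x | 0 ≤ x.1 ∧ x.1 ≤ 2 ∧ 0 ≤ x.2 ∧ x.2 ≤ 2 ∧
      x.2 = (1 / 2) * x.1 + 1 / 2})
    (PB : Set ((ℝ × ℝ) × ((ℝ × ℝ) × (ℝ × ℝ))))
    (hPB : PB = {p | p.1 ∈ P ∧
      (0 ≤ p.2.1.1 ∧ p.2.1.1 ≤ 1) ∧ (0 ≤ p.2.1.2 ∧ p.2.1.2 ≤ 1) ∧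
      (0 ≤ p.2.2.1 ∧ p.2.2.1 ≤ 1) ∧ (0 ≤ p.2.2.2 ∧ p.2.2.2 ≤ 1) ∧
      p.1.1 = p.2.1.1 + 2 * p.2.1.2 ∧ p.1.2 = p.2.2.1 + 2 * p.2.2.2 ∧
      p.2.1.1 + p.2.1.2 ≤ 1 ∧ p.2.2.1 + p.2.2.2 ≤ 1})
    (S : Set ((ℝ × ℝ) × ((ℝ × ℝ) × (ℝ × ℝ))))
    (hS : S = {p | 0 < p.1.2 - p.2.1.2 ∧ p.1.2 - p.2.1.2 < 1}) :
    {x ∈ P | ∃ w₁ w₂ : ℤ, x = ((w₁ : ℝ), (w₂ : ℝ))} = {((1 : ℝ), (1 : ℝ))} ∧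
    Prod.fst '' (convexHull ℝ (PB \ S)) = {((1 : ℝ), (1 : ℝ))} ∧
    convexHull ℝ {x ∈ P | ∃ w₁ w₂ : ℤ, x = ((w₁ : ℝ), (w₂ : ℝ))} =
      {((1 : ℝ), (1 : ℝ))} := by
  subst hP hPB hS
  have hint : {x ∈ {x : ℝ × ℝ | 0 ≤ x.1 ∧ x.1 ≤ 2 ∧ 0 ≤ x.2 ∧ x.2 ≤ 2 ∧
      x.2 = (1 / 2) * x.1 + 1 / 2} | ∃ w₁ w₂ : ℤ, x = ((w₁ : ℝ), (w₂ : ℝ))} =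
      {((1 : ℝ), (1 : ℝ))} := by
    refine eq_singleton_iff_unique_mem.2 ⟨⟨by norm_num, 1, 1, by norm_num⟩, ?_⟩
    rintro _ ⟨⟨h₀, h₂, -, -, hline⟩, w₁, w₂, rfl⟩
    obtain ⟨rfl, rfl⟩ := eq_one_of_int_mem_line h₀ h₂ hline
    norm_num
  refine ⟨hint, ?_, by rw [hint, convexHull_singleton]⟩
  refine (LinearMap.fst ℝ (ℝ × ℝ) ((ℝ × ℝ) × (ℝ × ℝ))).image_convexHull_eq_singleton
    ⟨((1, 1), ((1, 0), (1, 0))), by norm_num⟩ ?_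
  rintro ⟨⟨x₁, x₂⟩, ⟨z₁₁, z₁₂⟩, z₂⟩ ⟨⟨⟨-, -, -, -, hline⟩, ⟨hz₁₁, -⟩, ⟨hz₁₂, -⟩, -, -, hx₁, -, hsum, -⟩,
    hsplit⟩
  obtain ⟨rfl, rfl⟩ := eq_one_of_notMem_split hline hx₁ hz₁₁ hz₁₂ hsum hsplit
  rfl
end

section
/- Let P = {x ∈ [0,2]² : x₂ = (1/2)x₁ + 1/2}, so that P ∩ ℤ² = {(1,1)} and (1,1) lies in the relative interior of P. Then there is no lattice-free convex set S ⊆ ℝ² — that is, no convex set whose interior contains no point of ℤ² — such that conv(P \ S) = {(1,1)}. -/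
/-!
Since `conv(P \ S) = {(1,1)}` forces `P \ S = {(1,1)}`, both endpoints `(0, 1/2)` and `(2, 3/2)`
of the segment `P` lie in `S`; convexity of `S` then puts their midpoint `(1,1)` in `S` as well,
a contradiction.
-/

open Set

theorem Convex.sdiff_ne_singleton_of_mem_segment {𝕜 E : Type*} [Semiring 𝕜] [PartialOrder 𝕜]
    [AddCommMonoid E] [SMul 𝕜 E] {S s : Set E} (hS : Convex 𝕜 S) {a b p : E}
    (ha : a ∈ s) (hb : b ∈ s) (hap : a ≠ p) (hbp : b ≠ p) (hp : p ∈ segment 𝕜 a b) :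
    s \ S ≠ {p} := by
  intro h
  have mem_S {x : E} (hx : x ∈ s) (hxp : x ≠ p) : x ∈ S := by
    by_contra hxS
    have hx' : x ∈ s \ S := ⟨hx, hxS⟩
    exact hxp (by rwa [h, mem_singleton_iff] at hx')
  have hpS : p ∉ S := (h.symm ▸ mem_singleton p : p ∈ s \ S).2
  exact hpS (hS.segment_subset (mem_S ha hap) (mem_S hb hbp) hp)

/-- Isometric for `|c| ≤ 1` because `ℝ × ℝ` carries the sup norm. -/
noncomputable def affineGraph (c d : ℝ) (hc : |c| ≤ 1) : ℝ →ᵃⁱ[ℝ] ℝ × ℝ where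
  toFun t := (t, c * t + d)
  linear := LinearMap.id.prod (c • LinearMap.id)
  map_vadd' t v := by
    show (v + t, c * (v + t) + d) = (v, c * v) + (t, c * t + d)
    rw [Prod.mk_add_mk]
    congr 1
    ring
  norm_map t := by
    simpa [Prod.norm_def, abs_mul] using mul_le_of_le_one_left (abs_nonneg t) hc

theorem affineGraph_apply (c d : ℝ) (hc : |c| ≤ 1) (t : ℝ) :
    affineGraph c d hc t = (t, c * t + d) := rfl

theorem AffineIsometry.image_Ioo_subset_intrinsicInterior {Q : Type*} [PseudoMetricSpace Q]
    {W : Type*} [SeminormedAddCommGroup W] [NormedSpace ℝ W] [NormedAddTorsor W Q]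
    (φ : ℝ →ᵃⁱ[ℝ] Q) (a b : ℝ) : φ '' Ioo a b ⊆ intrinsicInterior ℝ (φ '' Icc a b) := by
  rw [AffineIsometry.intrinsicInterior_image, ← interior_Icc]
  exact image_mono interior_subset_intrinsicInterior

theorem setOf_eq_image_affineGraph :
    {x : ℝ × ℝ | 0 ≤ x.1 ∧ x.1 ≤ 2 ∧ 0 ≤ x.2 ∧ x.2 ≤ 2 ∧ x.2 = (1 / 2) * x.1 + 1 / 2} =
      affineGraph (1 / 2) (1 / 2) (by norm_num [abs_of_pos]) '' Icc 0 2 := by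
  ext ⟨x, y⟩
  simp only [mem_ofPred_eq, mem_image, mem_Icc, affineGraph_apply, Prod.mk.injEq]
  constructor
  · rintro ⟨h0, h2, -, -, rfl⟩
    exact ⟨x, ⟨h0, h2⟩, rfl, rfl⟩
  · rintro ⟨t, ⟨h0, h2⟩, rfl, rfl⟩
    exact ⟨h0, h2, by linarith, by linarith, rfl⟩

/-- Let `P = {x ∈ [0,2]² : x₂ = x₁/2 + 1/2}`, so that
`P ∩ ℤ² = {(1,1)}` and `(1,1)` lies in the relative interior of `P`.  Then there is no
lattice-free convex set `S ⊆ ℝ²` — no convex set whose interior contains no point of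
`ℤ²` — such that `conv(P \ S) = {(1,1)}`. -/
theorem stmt18 (P : Set (ℝ × ℝ))
    (hP : P = {x | 0 ≤ x.1 ∧ x.1 ≤ 2 ∧ 0 ≤ x.2 ∧ x.2 ≤ 2 ∧
      x.2 = (1 / 2) * x.1 + 1 / 2}) :
    ({x ∈ P | ∃ w₁ w₂ : ℤ, x = ((w₁ : ℝ), (w₂ : ℝ))} = {((1 : ℝ), (1 : ℝ))}) ∧
    ((1 : ℝ), (1 : ℝ)) ∈ intrinsicInterior ℝ P ∧
    ¬ ∃ S : Set (ℝ × ℝ), Convex ℝ S ∧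
        (∀ p ∈ interior S, ¬ ∃ w₁ w₂ : ℤ, p = ((w₁ : ℝ), (w₂ : ℝ))) ∧
        convexHull ℝ (P \ S) = {((1 : ℝ), (1 : ℝ))} := by
  subst hP
  refine ⟨?_, ?_, ?_⟩
  · ext x
    simp only [mem_ofPred_eq, mem_singleton_iff]
    constructor
    · rintro ⟨⟨h0, h2, -, -, hline⟩, w₁, w₂, rfl⟩
      simp only at h0 h2 hline
      have hw : 2 * w₂ = w₁ + 1 ∧ 0 ≤ w₁ ∧ w₁ ≤ 2 := by
        refine ⟨?_, by exact_mod_cast h0, by exact_mod_cast h2⟩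
        exact_mod_cast (by linarith : (2 * w₂ : ℝ) = w₁ + 1)
      obtain ⟨rfl, rfl⟩ : w₁ = 1 ∧ w₂ = 1 := by omega
      norm_num
    · rintro rfl
      exact ⟨by norm_num, 1, 1, by norm_num⟩
  · rw [setOf_eq_image_affineGraph]
    exact AffineIsometry.image_Ioo_subset_intrinsicInterior _ 0 2
      ⟨1, by norm_num, by norm_num [affineGraph_apply]⟩
  · rintro ⟨S, hS, -, hhull⟩
    rw [convexHull_eq_singleton] at hhull
    refine hS.sdiff_ne_singleton_of_mem_segment (a := (0, 1 / 2)) (b := (2, 3 / 2))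
      (by norm_num) (by norm_num) (by norm_num) (by norm_num) ?_ hhull
    exact ⟨1 / 2, 1 / 2, by norm_num, by norm_num, by norm_num, by norm_num⟩
end

section
/- Let B ∈ Γ^q_u be a binarization polytope. Then B ∩ (ℝ × {0,1}^q) does not contain two points (x,z) and (x′,z) with x ≠ x′; that is, the map sending z ∈ {0,1}^q with (x,z) ∈ B to the corresponding x-value is well-defined. Consequently, B ∩ (ℝ × {0,1}^q) contains at least u + 1 points with distinct z-components, and hence 2^q ≥ u + 1, i.e., q ≥ ⌈log₂(u+1)⌉. -/
open Set

lemma stmt19_aux (u q : ℕ) (B : Set (ℝ × (Fin q → ℝ))) (hconv : Convex ℝ B)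
    (hproj : Prod.fst '' (B ∩ {p | ∀ j, p.2 j = 0 ∨ p.2 j = 1})
      = {x : ℝ | ∃ k : ℕ, k ≤ u ∧ x = (k : ℝ)})
    (p p' : ℝ × (Fin q → ℝ)) (hp : p ∈ B ∩ {p | ∀ j, p.2 j = 0 ∨ p.2 j = 1})
    (hp' : p' ∈ B ∩ {p | ∀ j, p.2 j = 0 ∨ p.2 j = 1}) (hz : p.2 = p'.2)
    (k k' : ℕ) (hxk : p.1 = (k : ℝ)) (hxk' : p'.1 = (k' : ℝ)) (hkk : k < k') : False := by
  set t : ℝ := (1/2) / ((k' : ℝ) - k) with ht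
  have hd : (1 : ℝ) ≤ (k' : ℝ) - k := by
    have : (k : ℝ) + 1 ≤ k' := by exact_mod_cast hkk
    linarith
  have ht0 : 0 < t := by positivity
  have ht1 : t ≤ 1 := by
    rw [ht, div_le_one (by linarith)]; linarith
  have hmem : (1 - t) • p + t • p' ∈ B :=
    hconv hp.1 hp'.1 (by linarith) (le_of_lt ht0) (by ring)
  have h1 : ((1 - t) • p + t • p').1 = (k : ℝ) + 1/2 := by
    have hne : (k' : ℝ) - k ≠ 0 := by linarith
    simp only [Prod.fst_add, Prod.smul_fst, smul_eq_mul, hxk, hxk']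
    field_simp [ht]
    have hte : t * ((k' : ℝ) - k) = 1/2 := by rw [ht]; exact div_mul_cancel₀ _ hne
    clear_value t
    linear_combination 2 * hte
  have h2 : ((1 - t) • p + t • p').2 = p.2 := by
    funext j
    simp only [Prod.snd_add, Prod.smul_snd, Pi.add_apply, Pi.smul_apply, smul_eq_mul, ← hz]
    ring
  have hmem2 : ((1 - t) • p + t • p').1 ∈
      Prod.fst '' (B ∩ {p | ∀ j, p.2 j = 0 ∨ p.2 j = 1}) :=
    ⟨_, ⟨hmem, by rw [Set.mem_setOf_eq, h2]; exact hp.2⟩, rfl⟩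
  rw [hproj] at hmem2
  obtain ⟨m, hm, hmx⟩ := hmem2
  rw [h1] at hmx
  have : (2 * m : ℕ) = (2 * k + 1 : ℕ) := by
    have : (2 * m : ℝ) = 2 * k + 1 := by push_cast; linarith
    exact_mod_cast this
  omega

/-- Let `B ∈ Γ^q_u`.  Then `B ∩ (ℝ × {0,1}^q)` contains no two points
`(x,z)` and `(x',z)` with `x ≠ x'` (the 0-1 `z`-vector determines the `x`-value);
consequently `B ∩ (ℝ × {0,1}^q)` contains at least `u+1` points with pairwise distinct
`z`-components, hence `2^q ≥ u + 1`, i.e. `q ≥ ⌈log₂(u+1)⌉`. -/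
theorem stmt19 (u q : ℕ) (hu : 0 < u) (hq : 0 < q)
    (B : Set (ℝ × (Fin q → ℝ))) (hB : IsBinPoly u q B) :
    (∀ p ∈ B ∩ {p | ∀ j, p.2 j = 0 ∨ p.2 j = 1},
      ∀ p' ∈ B ∩ {p | ∀ j, p.2 j = 0 ∨ p.2 j = 1}, p.2 = p'.2 → p.1 = p'.1) ∧
    (∃ f : Fin (u + 1) → ℝ × (Fin q → ℝ),
      (∀ k, f k ∈ B ∩ {p | ∀ j, p.2 j = 0 ∨ p.2 j = 1}) ∧
      Function.Injective (fun k => (f k).2)) ∧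
    u + 1 ≤ 2 ^ q ∧
    Nat.clog 2 (u + 1) ≤ q := by
  obtain ⟨hpoly, hbox, hproj⟩ := hB
  have hconv : Convex ℝ B := by
    obtain ⟨V, -, rfl⟩ := hpoly
    exact convex_convexHull ℝ _
  have key : ∀ p ∈ B ∩ {p | ∀ j, p.2 j = 0 ∨ p.2 j = 1},
      ∀ p' ∈ B ∩ {p | ∀ j, p.2 j = 0 ∨ p.2 j = 1}, p.2 = p'.2 → p.1 = p'.1 := by
    intro p hp p' hp' hz
    have hpx : p.1 ∈ {x : ℝ | ∃ k : ℕ, k ≤ u ∧ x = (k : ℝ)} := by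
      rw [← hproj]; exact ⟨p, hp, rfl⟩
    have hpx' : p'.1 ∈ {x : ℝ | ∃ k : ℕ, k ≤ u ∧ x = (k : ℝ)} := by
      rw [← hproj]; exact ⟨p', hp', rfl⟩
    obtain ⟨k, -, hxk⟩ := hpx
    obtain ⟨k', -, hxk'⟩ := hpx'
    rcases lt_trichotomy k k' with h | h | h
    · exact absurd (stmt19_aux u q B hconv hproj p p' hp hp' hz k k' hxk hxk' h) id
    · rw [hxk, hxk', h]
    · exact absurd (stmt19_aux u q B hconv hproj p' p hp' hp hz.symm k' k hxk' hxk h) id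
  refine ⟨key, ?_, ?_, ?_⟩
  · have hex : ∀ k : Fin (u + 1), ∃ p, p ∈ B ∩ {p | ∀ j, p.2 j = 0 ∨ p.2 j = 1} ∧
        p.1 = ((k : ℕ) : ℝ) := by
      intro k
      have : ((k : ℕ) : ℝ) ∈ {x : ℝ | ∃ m : ℕ, m ≤ u ∧ x = (m : ℝ)} :=
        ⟨k, Nat.lt_succ_iff.mp k.isLt, rfl⟩
      rw [← hproj] at this
      obtain ⟨p, hp, hpx⟩ := this
      exact ⟨p, hp, hpx⟩
    choose f hf hfx using hex
    refine ⟨f, hf, ?_⟩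
    intro k k' h
    have : (f k).1 = (f k').1 := key _ (hf k) _ (hf k') h
    rw [hfx, hfx] at this
    exact Fin.ext (Nat.cast_injective this)
  all_goals
    have hcard : u + 1 ≤ 2 ^ q := by
      have hex : ∀ k : Fin (u + 1), ∃ p, p ∈ B ∩ {p | ∀ j, p.2 j = 0 ∨ p.2 j = 1} ∧
          p.1 = ((k : ℕ) : ℝ) := by
        intro k
        have : ((k : ℕ) : ℝ) ∈ {x : ℝ | ∃ m : ℕ, m ≤ u ∧ x = (m : ℝ)} :=
          ⟨k, Nat.lt_succ_iff.mp k.isLt, rfl⟩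
        rw [← hproj] at this
        obtain ⟨p, hp, hpx⟩ := this
        exact ⟨p, hp, hpx⟩
      choose f hf hfx using hex
      have hinj : Function.Injective (fun k : Fin (u + 1) => fun j => decide ((f k).2 j = 1)) := by
        intro k k' h
        have hzz : (f k).2 = (f k').2 := by
          funext j
          have hj := congrFun h j
          simp only [decide_eq_decide] at hj
          rcases (hf k).2 j with h1 | h1 <;> rcases (hf k').2 j with h2 | h2
          · rw [h1, h2]
          · have := hj.mpr h2; rw [h1] at this; norm_num at this
          · have := hj.mp h1; rw [h2] at this; norm_num at this
          · rw [h1, h2]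
        have : (f k).1 = (f k').1 := key _ (hf k) _ (hf k') hzz
        rw [hfx, hfx] at this
        exact Fin.ext (Nat.cast_injective this)
      have := Fintype.card_le_of_injective _ hinj
      simpa using this
    first
    | exact hcard
    | exact (Nat.clog_le_iff_le_pow (by norm_num)).mpr hcard
end
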